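/- arXiv:2402.16098 — 5 statements merged into one kernel-verified Lean document; each statement's English description precedes it below -/
import Mathlib

section
/- Let k be a field of characteristic 2, R = k[t_0, t_1, t_2, ...]/(t_i^2 : i ≥ 0) the ring of truncated polynomials, and for i ≥ 1 let v_i ∈ Der(R) be the derivation defined recursively by v_i = ∂_i + t_{i-1} v_{i+1}. Then [v_i, v_{i+1}] = v_{i+2} for all i ≥ 1. -/
/-- Let `k` be a field of characteristic 2,
`R = k[t₀, t₁, t₂, …]/(tᵢ² : i ≥ 0)` the ring of truncated polynomials, and for `i ≥ 1`
let `vᵢ ∈ Der(R)` be the pivot derivation defined recursively by `vᵢ = ∂ᵢ + t_{i-1} v_{i+1}`.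
Then `⁅vᵢ, v_{i+1}⁆ = v_{i+2}` for all `i ≥ 1`. -/
theorem fibonacci_bracket_pivot_succ
    {k : Type} [Field k] [CharP k 2]
    {R : Type} [CommRing R] [Algebra k R]
    -- `R = k[t₀, t₁, …]/(tᵢ²)` is the ring of truncated polynomials:
    (t : ℕ → R)
    (hsq : ∀ i, t i ^ 2 = 0)
    (hadj : Algebra.adjoin k (Set.range t) = ⊤)
    (hext : ∀ D D' : Derivation k R R, (∀ j, D (t j) = D' (t j)) → D = D')
    -- `pd i` is the partial derivative `∂ᵢ = ∂/∂tᵢ`: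
    (pd : ℕ → Derivation k R R)
    (hpd : ∀ i j, pd i (t j) = if i = j then 1 else 0)
    -- `v i` are the pivot elements, defined recursively by `vᵢ = ∂ᵢ + t_{i-1} v_{i+1}`,
    -- i.e. the derivations `vᵢ = ∂ᵢ + t_{i-1}(∂_{i+1} + tᵢ(∂_{i+2} + ⋯))`:
    (v : ℕ → Derivation k R R)
    (hrec : ∀ i, 1 ≤ i → v i = pd i + t (i - 1) • v (i + 1))
    (hvlt : ∀ i j, 1 ≤ i → j < i → v i (t j) = 0)
    (hveq : ∀ i, 1 ≤ i → v i (t i) = 1)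
    (hvgt : ∀ i j, 1 ≤ i → i < j → v i (t j) = ∏ m ∈ Finset.Ico (i - 1) (j - 1), t m)
    : ∀ i, 1 ≤ i → ⁅v i, v (i + 1)⁆ = v (i + 2) := by
  intro i hi
  apply hext
  intro j
  rw [Derivation.commutator_apply]
  have hpdprod : ∀ b a, i < a → pd i (∏ m ∈ Finset.Ico a b, t m) = 0 := by
    intro b
    induction b with
    | zero => intro a ha; simp
    | succ b ih =>
      intro a ha
      rcases le_or_gt a b with h | h
      · rw [Finset.prod_Ico_succ_top h, Derivation.leibniz, ih a ha, hpd,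
          if_neg (by omega : ¬ i = b)]
        simp
      · rw [Finset.Ico_eq_empty (by omega), Finset.prod_empty,
          Derivation.map_one_eq_zero]
  rcases lt_or_ge j i with hj | hj
  · rw [hvlt i j hi hj, hvlt (i+1) j (by omega) (by omega), map_zero, map_zero,
      hvlt (i+2) j (by omega) (by omega), sub_zero]
  rcases eq_or_lt_of_le hj with hj | hj
  · subst hj
    rw [hvlt (i+1) i (by omega) (by omega), hveq i hi, map_zero,
      Derivation.map_one_eq_zero, hvlt (i+2) i (by omega) (by omega), sub_zero]
  rcases eq_or_lt_of_le (by omega : i + 1 ≤ j) with hj | hj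
  · subst hj
    have e1 : v (i+1) (t (i+1)) = 1 := hveq (i+1) (by omega)
    have e2 : v i (t (i+1)) = t (i-1) := by
      rw [hvgt i (i+1) hi (by omega)]
      have : i + 1 - 1 = (i - 1) + 1 := by omega
      rw [this, Finset.prod_Ico_succ_top (le_refl _), Finset.Ico_self,
        Finset.prod_empty, one_mul]
    rw [e1, e2, Derivation.map_one_eq_zero, hvlt (i+1) (i-1) (by omega) (by omega),
      hvlt (i+2) (i+1) (by omega) (by omega), sub_zero]
  -- main case : j ≥ i + 2
  set X := ∏ m ∈ Finset.Ico (i+1) (j-1), t m with hX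
  have h1 : v (i+1) (t j) = t i * X := by
    rw [hvgt (i+1) j (by omega) (by omega)]
    have e : i + 1 - 1 = i := by omega
    rw [e, Finset.prod_eq_prod_Ico_succ_bot (by omega : i < j - 1)]
  have h2 : v i (t j) = t (i-1) * (t i * X) := by
    rw [hvgt i j hi (by omega),
      Finset.prod_eq_prod_Ico_succ_bot (by omega : i - 1 < j - 1)]
    have e : i - 1 + 1 = i := by omega
    rw [e, Finset.prod_eq_prod_Ico_succ_bot (by omega : i < j - 1)]
  have hvX : v i X = t (i-1) * v (i+1) X := by
    rw [hrec i hi]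
    simp [hX, hpdprod (j-1) (i+1) (by omega), smul_eq_mul]
  have hv1X : v (i+1) (t i * X) = t i * v (i+1) X := by
    rw [Derivation.leibniz, hvlt (i+1) i (by omega) (by omega)]
    simp [smul_eq_mul]
  have hRHS : v (i+2) (t j) = X := by
    rcases eq_or_lt_of_le (by omega : i + 2 ≤ j) with hj2 | hj2
    · rw [← hj2, hveq (i+2) (by omega), hX, ← hj2]
      rw [show i + 2 - 1 = i + 1 from by omega, Finset.Ico_self, Finset.prod_empty]
    · rw [hvgt (i+2) j (by omega) hj2, show i + 2 - 1 = i + 1 from by omega]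
  rw [h1, h2, hRHS]
  rw [Derivation.leibniz, hveq i hi, hvX, Derivation.leibniz, hvlt (i+1) (i-1) (by omega) (by omega), hv1X]
  simp [smul_eq_mul]
  ring
end

section
/- With the same setup (characteristic 2, truncated polynomial ring R, pivot derivations v_i), for all 1 ≤ i < j one has [v_i, v_j] = t_{i-1} t_i ⋯ t_{j-3} v_{j+1} (where the product of t's is empty, i.e. equals 1, when j = i+1, giving [v_i,v_{i+1}] = v_{i+2}). -/
lemma deriv_prod {k R : Type} [Field k] [CommRing R] [Algebra k R]
    (D : Derivation k R R) (f : ℕ → R) (s : Finset ℕ) :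
    D (∏ m ∈ s, f m) = ∑ m ∈ s, (∏ l ∈ s.erase m, f l) * D (f m) := by
  classical
  induction s using Finset.induction with
  | empty => simp
  | @insert a s hane ih =>
    rw [Finset.prod_insert hane, Derivation.leibniz, Finset.sum_insert hane,
      Finset.erase_insert hane, ih, smul_eq_mul, smul_eq_mul, Finset.mul_sum]
    rw [add_comm]
    congr 1
    refine Finset.sum_congr rfl fun x hx => ?_
    rw [Finset.erase_insert_of_ne (by rintro rfl; exact hane hx),
      Finset.prod_insert (fun h => hane (Finset.mem_of_mem_erase h))]
    ring

lemma deriv_prod_zero {k R : Type} [Field k] [CommRing R] [Algebra k R]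
    (D : Derivation k R R) (f : ℕ → R) (s : Finset ℕ)
    (h : ∀ m ∈ s, D (f m) = 0) : D (∏ m ∈ s, f m) = 0 := by
  rw [deriv_prod]
  exact Finset.sum_eq_zero fun m hm => by rw [h m hm, mul_zero]

lemma sq_kill {R : Type} [CommRing R] {a P Q : R} (h : a ^ 2 = 0) :
    a * P * (a * Q) = 0 := by
  have : a * P * (a * Q) = a ^ 2 * (P * Q) := by ring
  rw [this, h, zero_mul]



/-- With the truncated polynomial ring `R` over a field of characteristic 2
and the pivot derivations `vᵢ = ∂ᵢ + t_{i-1} v_{i+1}`, for all `1 ≤ i < j` one has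
`⁅vᵢ, vⱼ⁆ = t_{i-1} tᵢ ⋯ t_{j-3} v_{j+1}` (the product of the `t`'s being empty, i.e. `1`,
when `j = i + 1`). -/
theorem fibonacci_bracket_pivot_general
    {k : Type} [Field k] [CharP k 2]
    {R : Type} [CommRing R] [Algebra k R]
    -- `R = k[t₀, t₁, …]/(tᵢ²)` is the ring of truncated polynomials:
    (t : ℕ → R)
    (hsq : ∀ i, t i ^ 2 = 0)
    (hadj : Algebra.adjoin k (Set.range t) = ⊤)
    (hext : ∀ D D' : Derivation k R R, (∀ j, D (t j) = D' (t j)) → D = D')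
    -- `pd i` is the partial derivative `∂ᵢ = ∂/∂tᵢ`:
    (pd : ℕ → Derivation k R R)
    (hpd : ∀ i j, pd i (t j) = if i = j then 1 else 0)
    -- `v i` are the pivot elements, defined recursively by `vᵢ = ∂ᵢ + t_{i-1} v_{i+1}`,
    -- i.e. the derivations `vᵢ = ∂ᵢ + t_{i-1}(∂_{i+1} + tᵢ(∂_{i+2} + ⋯))`:
    (v : ℕ → Derivation k R R)
    (hrec : ∀ i, 1 ≤ i → v i = pd i + t (i - 1) • v (i + 1))
    (hvlt : ∀ i j, 1 ≤ i → j < i → v i (t j) = 0)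
    (hveq : ∀ i, 1 ≤ i → v i (t i) = 1)
    (hvgt : ∀ i j, 1 ≤ i → i < j → v i (t j) = ∏ m ∈ Finset.Ico (i - 1) (j - 1), t m)
    : ∀ i j, 1 ≤ i → i < j →
        ⁅v i, v j⁆ = (∏ m ∈ Finset.Ico (i - 1) (j - 2), t m) • v (j + 1) := by
  suffices H : ∀ d i, 1 ≤ i →
      ⁅v i, v (i + 1 + d)⁆ =
        (∏ m ∈ Finset.Ico (i - 1) (i + 1 + d - 2), t m) • v (i + 1 + d + 1) by
    intro i j hi hij
    obtain ⟨d, rfl⟩ : ∃ d, j = i + 1 + d := ⟨j - (i + 1), by omega⟩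
    exact H d i hi
  intro d
  induction d with
  | zero =>
    -- base case: ⁅v i, v (i+1)⁆ = v (i+2)
    intro i hi
    rw [show i + 1 + 0 - 2 = i - 1 by omega, Finset.Ico_self, Finset.prod_empty, one_smul,
      show i + 1 + 0 = i + 1 by omega]
    apply hext
    intro n
    rw [Derivation.commutator_apply]
    by_cases h1 : n < i
    · rw [hvlt (i + 1) n (by omega) (by omega), hvlt i n hi h1,
        Derivation.map_zero, Derivation.map_zero, hvlt (i + 2) n (by omega) (by omega),
        sub_zero]
    by_cases h2 : n = i
    · subst h2
      rw [hvlt (n + 1) n (by omega) (by omega), hveq n hi, Derivation.map_zero,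
        Derivation.map_one_eq_zero, hvlt (n + 2) n (by omega) (by omega), sub_zero]
    by_cases h3 : n = i + 1
    · subst h3
      rw [hveq (i + 1) (by omega), hvgt i (i + 1) hi (by omega),
        Derivation.map_one_eq_zero, hvlt (i + 2) (i + 1) (by omega) (by omega)]
      rw [deriv_prod_zero]
      · ring
      · intro m hm
        simp only [Finset.mem_Ico] at hm
        exact hvlt (i + 1) m (by omega) (by omega)
    by_cases h4 : n = i + 2
    · subst h4
      rw [hvgt (i + 1) (i + 2) (by omega) (by omega), hvgt i (i + 2) hi (by omega),
        hveq (i + 2) (by omega)]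
      rw [show Finset.Ico (i + 1 - 1) (i + 2 - 1) = {i} by
        ext x; simp only [Finset.mem_Ico, Finset.mem_singleton]; omega]
      rw [Finset.prod_singleton, hveq i hi]
      rw [deriv_prod_zero]
      · ring
      · intro m hm
        simp only [Finset.mem_Ico] at hm
        exact hvlt (i + 1) m (by omega) (by omega)
    -- main case : n > i + 2
    have h5 : i + 2 < n := by omega
    rw [hvgt (i + 1) n (by omega) (by omega), hvgt i n hi (by omega),
      hvgt (i + 2) n (by omega) (by omega)]
    rw [show i + 1 - 1 = i by omega, show i + 2 - 1 = i + 1 by omega]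
    set s1 := Finset.Ico i (n - 1) with hs1
    set s2 := Finset.Ico (i - 1) (n - 1) with hs2
    -- compute v i (∏ s1)
    rw [deriv_prod (v i) t s1]
    have hmem_i : i ∈ s1 := by simp [hs1, Finset.mem_Ico]; omega
    rw [← Finset.add_sum_erase _ _ hmem_i]
    have hmem_i1 : i + 1 ∈ s1.erase i := by
      simp [hs1, Finset.mem_erase, Finset.mem_Ico]; omega
    rw [← Finset.add_sum_erase _ _ hmem_i1]
    have hsum0 : ∑ m ∈ (s1.erase i).erase (i + 1),
        (∏ l ∈ s1.erase m, t l) * v i (t m) = 0 := by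
      apply Finset.sum_eq_zero
      intro m hm
      simp only [Finset.mem_erase, hs1, Finset.mem_Ico] at hm
      rw [hvgt i m hi (by omega)]
      have e1 : i ∈ s1.erase m := by
        simp [hs1, Finset.mem_erase, Finset.mem_Ico]; omega
      have e2 : i ∈ Finset.Ico (i - 1) (m - 1) := by
        simp [Finset.mem_Ico]; omega
      rw [← Finset.mul_prod_erase _ _ e1, ← Finset.mul_prod_erase _ _ e2]
      exact sq_kill (hsq i)
    rw [hsum0, add_zero]
    -- compute v (i+1) (∏ s2)
    rw [deriv_prod (v (i + 1)) t s2]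
    have hmemb : i + 1 ∈ s2 := by simp [hs2, Finset.mem_Ico]; omega
    rw [Finset.sum_eq_single (i + 1) ?_ (fun h => absurd hmemb h)]
    · -- remaining algebraic identity
      rw [hveq i hi, hveq (i + 1) (by omega)]
      rw [hvgt i (i + 1) hi (by omega)]
      rw [show Finset.Ico (i - 1) (i + 1 - 1) = {i - 1} by
        ext x; simp only [Finset.mem_Ico, Finset.mem_singleton]; omega]
      rw [Finset.prod_singleton]
      have hes : s1.erase i = Finset.Ico (i + 1) (n - 1) := by
        ext x; simp only [hs1, Finset.mem_erase, Finset.mem_Ico]; omega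
      have hins : s2.erase (i + 1) = insert (i - 1) (s1.erase (i + 1)) := by
        ext x
        simp only [hs1, hs2, Finset.mem_erase, Finset.mem_Ico, Finset.mem_insert]
        omega
      have hnotmem : i - 1 ∉ s1.erase (i + 1) := by
        simp only [hs1, Finset.mem_erase, Finset.mem_Ico]; omega
      rw [hins, Finset.prod_insert hnotmem, hes]
      ring
    · intro b hb hbne
      simp only [hs2, Finset.mem_Ico] at hb
      by_cases hb2 : b < i + 1
      · rw [hvlt (i + 1) b (by omega) hb2, mul_zero]
      · rw [hvgt (i + 1) b (by omega) (by omega)]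
        have e1 : i ∈ s2.erase b := by
          simp [hs2, Finset.mem_erase, Finset.mem_Ico]; omega
        have e2 : i ∈ Finset.Ico (i + 1 - 1) (b - 1) := by
          simp [Finset.mem_Ico]; omega
        rw [← Finset.mul_prod_erase _ _ e1, ← Finset.mul_prod_erase _ _ e2]
        exact sq_kill (hsq i)
  | succ d ih =>
    intro i hi
    have hJ : i + 1 + (d + 1) = i + d + 2 := by omega
    rw [hJ, show i + d + 2 - 2 = i + d by omega, hrec i hi, add_lie]
    have h1 : ⁅pd i, v (i + d + 2)⁆ = 0 := by
      apply hext _ 0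
      intro n
      rw [Derivation.commutator_apply]
      have h2 : v (i + d + 2) (pd i (t n)) = 0 := by
        rw [hpd]
        split
        · exact Derivation.map_one_eq_zero _
        · exact Derivation.map_zero _
      rw [h2, sub_zero]
      rcases lt_trichotomy n (i + d + 2) with h | h | h
      · rw [hvlt _ _ (by omega) h, Derivation.map_zero, Derivation.zero_apply]
      · rw [h, hveq _ (by omega), Derivation.map_one_eq_zero, Derivation.zero_apply]
      · rw [hvgt _ _ (by omega) h, Derivation.zero_apply]
        apply deriv_prod_zero
        intro m hm
        simp only [Finset.mem_Ico] at hm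
        rw [hpd, if_neg (by omega)]
    rw [h1, zero_add]
    have hIH := ih (i + 1) (by omega)
    rw [show i + 1 + 1 + d = i + d + 2 by omega, show i + 1 - 1 = i by omega,
      show i + d + 2 - 2 = i + d by omega] at hIH
    have h2 : ⁅t (i - 1) • v (i + 1), v (i + d + 2)⁆ =
        t (i - 1) • ⁅v (i + 1), v (i + d + 2)⁆ := by
      ext x
      rw [Derivation.commutator_apply, Derivation.smul_apply, Derivation.smul_apply,
        Derivation.smul_apply, Derivation.commutator_apply, smul_eq_mul, smul_eq_mul,
        smul_eq_mul, Derivation.leibniz, hvlt (i + d + 2) (i - 1) (by omega) (by omega),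
        smul_eq_mul, smul_eq_mul, mul_zero, add_zero, mul_sub]
    rw [h2, hIH, smul_smul]
    congr 1
    rw [Finset.prod_eq_prod_Ico_succ_bot (show i - 1 < i + d by omega) t,
      show i - 1 + 1 = i by omega]
end

section
/- Let A be the k-linear span of the set X_A = { t_0 t_1^{z_1} ⋯ t_i^{z_i} v_{i+4} : i ≥ 0, z_j ∈ {0,1} } of basis monomials of the Fibonacci Lie algebra L that contain the factor t_0. Then A is an abelian ideal of L. -/
set_option linter.unusedSectionVars false
set_option maxHeartbeats 1000000

open Finset

section FibAux2

variable {k : Type} [Field k] [CharP k 2]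
    {R : Type} [CommRing R] [Algebra k R]
    (t : ℕ → R)
    (hext : ∀ D D' : Derivation k R R, (∀ j, D (t j) = D' (t j)) → D = D')
    (pd : ℕ → Derivation k R R)
    (hpd : ∀ i j, pd i (t j) = if i = j then 1 else 0)
    (v : ℕ → Derivation k R R)
    (hrec : ∀ i, 1 ≤ i → v i = pd i + t (i - 1) • v (i + 1))
    (hvlt : ∀ i j, 1 ≤ i → j < i → v i (t j) = 0)
    (hveq : ∀ i, 1 ≤ i → v i (t i) = 1)
    (hvgt : ∀ i j, 1 ≤ i → i < j → v i (t j) = ∏ m ∈ Finset.Ico (i - 1) (j - 1), t m)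

theorem fib_dprod' (D : Derivation k R R) (s : Finset ℕ) (f : ℕ → R) :
    D (∏ i ∈ s, f i) = ∑ i ∈ s, D (f i) * ∏ j ∈ s.erase i, f j := by
  classical
  induction s using Finset.induction_on with
  | empty => simp
  | @insert a s ha ih =>
      rw [Finset.prod_insert ha, Derivation.leibniz, smul_eq_mul, smul_eq_mul, ih,
        Finset.sum_insert ha, Finset.erase_insert ha, Finset.mul_sum]
      have h2 : ∀ i ∈ s, D (f i) * ∏ j ∈ (insert a s).erase i, f j
          = f a * (D (f i) * ∏ j ∈ s.erase i, f j) := by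
        intro i hi
        rw [Finset.erase_insert_of_ne (ne_of_mem_of_not_mem hi ha).symm,
          Finset.prod_insert (fun h => ha (Finset.mem_of_mem_erase h))]
        ring
      rw [Finset.sum_congr rfl h2]
      ring


theorem fib_lie_fsmul (D E : Derivation k R R) (f : R) :
    ⁅D, f • E⁆ = D f • E + f • ⁅D, E⁆ := by
  ext r
  simp only [Derivation.commutator_apply, Derivation.smul_apply, Derivation.add_apply,
    Derivation.leibniz, smul_eq_mul]
  ring

theorem fib_fsmul_lie (D E : Derivation k R R) (f : R) :
    ⁅f • D, E⁆ = f • ⁅D, E⁆ - E f • D := by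
  ext r
  simp only [Derivation.commutator_apply, Derivation.smul_apply, Derivation.sub_apply,
    Derivation.leibniz, smul_eq_mul]
  ring

include t hext pd hpd v hrec hvlt hveq hvgt

theorem fib_pd_lie_v_eq (i : ℕ) (hi : 1 ≤ i) : ⁅pd i, v (i + 1)⁆ = v (i + 2) := by
  apply hext
  intro j
  have h2 : v (i + 1) (pd i (t j)) = 0 := by
    rw [hpd]
    split
    · exact (v (i + 1)).map_one_eq_zero
    · exact (v (i + 1)).map_zero
  rw [Derivation.commutator_apply, h2, sub_zero]
  rcases lt_trichotomy j (i + 1) with hj | hj | hj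
  · rw [hvlt _ _ (by omega) hj, hvlt _ _ (by omega) (by omega), map_zero]
  · subst hj
    rw [hveq _ (by omega), hvlt _ _ (by omega) (by omega), (pd i).map_one_eq_zero]
  · rw [hvgt _ _ (by omega) hj]
    have hsum : pd i (∏ m ∈ Finset.Ico (i + 1 - 1) (j - 1), t m)
        = if i ∈ Finset.Ico (i + 1 - 1) (j - 1) then
            ∏ m ∈ (Finset.Ico (i + 1 - 1) (j - 1)).erase i, t m else 0 := by
      classical
      rw [fib_dprod']
      rw [Finset.sum_congr rfl (fun m _ => by rw [hpd, ite_mul, one_mul, zero_mul])]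
      exact Finset.sum_ite_eq _ i _
    rw [hsum, if_pos (by simp; omega)]
    have he : (Finset.Ico (i + 1 - 1) (j - 1)).erase i = Finset.Ico (i + 1) (j - 1) := by
      simp only [Nat.add_sub_cancel]
      rw [Finset.Ico_erase_left, ← Finset.Ico_succ_left_eq_Ioo, Order.succ_eq_add_one]
    rw [he]
    rcases eq_or_lt_of_le (show i + 2 ≤ j by omega) with hj2 | hj2
    · rw [← hj2, hveq _ (by omega)]
      have : Finset.Ico (i + 1) (i + 2 - 1) = ∅ := by
        apply Finset.Ico_eq_empty; omega
      rw [this, Finset.prod_empty]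
    · rw [hvgt _ _ (by omega) hj2]
      congr 1

theorem fib_pd_lie_v_zero (i p : ℕ) (h : i + 1 < p) : ⁅pd i, v p⁆ = 0 := by
  apply hext
  intro j
  have h2 : v p (pd i (t j)) = 0 := by
    rw [hpd]; split
    · exact (v p).map_one_eq_zero
    · exact (v p).map_zero
  rw [Derivation.commutator_apply, h2, sub_zero, Derivation.zero_apply]
  rcases lt_trichotomy j p with hj | hj | hj
  · rw [hvlt _ _ (by omega) hj, map_zero]
  · subst hj
    rw [hveq _ (by omega), (pd i).map_one_eq_zero]
  · rw [hvgt _ _ (by omega) hj]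
    classical
    rw [fib_dprod']
    rw [Finset.sum_congr rfl (fun m _ => by rw [hpd, ite_mul, one_mul, zero_mul])]
    rw [Finset.sum_ite_eq _ i _, if_neg (by simp; omega)]

theorem fib_lie_vv_aux (d : ℕ) : ∀ i, 1 ≤ i →
    ⁅v i, v (i + d + 1)⁆ = (∏ m ∈ Finset.Ico (i - 1) (i + d - 1), t m) • v (i + d + 2) := by
  induction d with
  | zero =>
      intro i hi
      have he : Finset.Ico (i - 1) (i + 0 - 1) = ∅ := Finset.Ico_eq_empty (by omega)
      rw [he, Finset.prod_empty, one_smul]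
      rw [hrec i hi, add_lie, fib_fsmul_lie, lie_self, smul_zero, zero_sub,
        hvlt _ _ (by omega) (by omega), zero_smul, neg_zero, add_zero]
      exact fib_pd_lie_v_eq t hext pd hpd v hrec hvlt hveq hvgt i hi
  | succ d ih =>
      intro i hi
      rw [hrec i hi, add_lie, fib_pd_lie_v_zero t hext pd hpd v hrec hvlt hveq hvgt i _ (by omega),
        zero_add, fib_fsmul_lie, hvlt _ _ (by omega) (by omega), zero_smul, sub_zero]
      have harg : i + 1 + d + 1 = i + (d + 1) + 1 := by omega
      have := ih (i + 1) (by omega)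
      rw [harg] at this
      rw [this, smul_smul]
      have harg2 : i + 1 + d + 2 = i + (d + 1) + 2 := by omega
      rw [harg2] at this ⊢
      congr 1
      have hlt : i - 1 < i + (d + 1) - 1 := by omega
      rw [Finset.prod_eq_prod_Ico_succ_bot hlt,
        show i - 1 + 1 = i + 1 - 1 from by omega,
        show i + (d + 1) - 1 = i + 1 + d - 1 from by omega]

theorem fib_lie_vv (i p : ℕ) (h1 : 1 ≤ i) (h2 : i < p) :
    ⁅v i, v p⁆ = (∏ m ∈ Finset.Ico (i - 1) (p - 2), t m) • v (p + 1) := by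
  obtain ⟨d, rfl⟩ : ∃ d, p = i + d + 1 := ⟨p - i - 1, by omega⟩
  have := fib_lie_vv_aux t hext pd hpd v hrec hvlt hveq hvgt d i h1
  rw [this]
  simp only [show i + d + 1 - 2 = i + d - 1 from by omega, show i + d + 1 + 1 = i + d + 2 from by omega]

end FibAux2

section FibAux3

variable {k : Type} [Field k] [CharP k 2]
    {R : Type} [CommRing R] [Algebra k R]
    (t : ℕ → R)
    (hsq : ∀ i, t i ^ 2 = 0)
    (hext : ∀ D D' : Derivation k R R, (∀ j, D (t j) = D' (t j)) → D = D')
    (pd : ℕ → Derivation k R R)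
    (hpd : ∀ i j, pd i (t j) = if i = j then 1 else 0)
    (v : ℕ → Derivation k R R)
    (hrec : ∀ i, 1 ≤ i → v i = pd i + t (i - 1) • v (i + 1))
    (hvlt : ∀ i j, 1 ≤ i → j < i → v i (t j) = 0)
    (hveq : ∀ i, 1 ≤ i → v i (t i) = 1)
    (hvgt : ∀ i j, 1 ≤ i → i < j → v i (t j) = ∏ m ∈ Finset.Ico (i - 1) (j - 1), t m)

include t hsq hext pd hpd v hrec hvlt hveq hvgt

theorem fib_tt (i : ℕ) : t i * t i = 0 := by rw [← pow_two]; exact hsq i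

theorem fib_t0t0 (x y : R) : (t 0 * x) * (t 0 * y) = 0 := by
  have h : (t 0 * x) * (t 0 * y) = (t 0 * t 0) * (x * y) := by ring
  rw [h, fib_tt t hsq hext pd hpd v hrec hvlt hveq hvgt 0, zero_mul]

theorem fib_vq_t0m (q : ℕ) (hq : 1 ≤ q) (m : R) : v q (t 0 * m) = t 0 * v q m := by
  rw [Derivation.leibniz, hvlt _ _ hq (by omega), smul_zero, add_zero, smul_eq_mul]

theorem fib_vanish (q n : ℕ) (z : ℕ → Bool) (h : n < q) :
    v q (t 0 * ∏ j ∈ Finset.Icc 1 n, if z j then t j else 1) = 0 := by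
  rw [fib_vq_t0m t hsq hext pd hpd v hrec hvlt hveq hvgt q (by omega)]
  have h2 : v q (∏ j ∈ Finset.Icc 1 n, if z j then t j else 1) = 0 := by
    rw [fib_dprod']
    apply Finset.sum_eq_zero
    intro j hj
    have hj' := Finset.mem_Icc.mp hj
    by_cases hz : z j
    · rw [if_pos hz, hvlt q j (by omega) (by omega), zero_mul]
    · rw [if_neg hz, (v q).map_one_eq_zero, zero_mul]
  rw [h2, mul_zero]

/-- the membership workhorse -/
theorem fib_memA (n : ℕ) (g : ℕ → R)
    (hg : ∀ j ∈ Finset.Icc 1 n, g j = t j ∨ g j = 1 ∨ g j = 0) :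
    (t 0 * ∏ j ∈ Finset.Icc 1 n, g j) • v (n + 4) ∈
      Submodule.span k {D : Derivation k R R | ∃ (n : ℕ) (z : ℕ → Bool),
        D = (t 0 * ∏ j ∈ Finset.Icc 1 n, if z j then t j else 1) • v (n + 4)} := by
  classical
  by_cases h0 : ∃ j ∈ Finset.Icc 1 n, g j = 0
  · obtain ⟨j, hj, hgj⟩ := h0
    rw [Finset.prod_eq_zero hj hgj, mul_zero, zero_smul]
    exact Submodule.zero_mem _
  · push_neg at h0
    apply Submodule.subset_span
    refine ⟨n, fun j => decide (g j = t j), ?_⟩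
    congr 2
    apply Finset.prod_congr rfl
    intro j hj
    simp only [decide_eq_true_eq]
    by_cases ht : g j = t j
    · rw [if_pos ht, ht]
    · rw [if_neg ht]
      rcases hg j hj with h | h | h
      · exact absurd h ht
      · exact h
      · exact absurd h (h0 j hj)


theorem fib_vmem (q : ℕ) (hq : 1 ≤ q) :
    v q ∈ LieSubalgebra.lieSpan k (Derivation k R R) {v 1, v 2} := by
  have key : ∀ d, v (d + 1) ∈ LieSubalgebra.lieSpan k (Derivation k R R) {v 1, v 2} ∧
      v (d + 2) ∈ LieSubalgebra.lieSpan k (Derivation k R R) {v 1, v 2} := by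
    intro d
    induction d with
    | zero =>
        exact ⟨LieSubalgebra.subset_lieSpan (by simp), LieSubalgebra.subset_lieSpan (by simp)⟩
    | succ d ih =>
        refine ⟨ih.2, ?_⟩
        have hb := fib_lie_vv t hext pd hpd v hrec hvlt hveq hvgt (d + 1) (d + 2)
          (by omega) (by omega)
        have he : Finset.Ico (d + 1 - 1) (d + 2 - 2) = ∅ := Finset.Ico_eq_empty (by omega)
        rw [he, Finset.prod_empty, one_smul] at hb
        rw [show d + 1 + 2 = d + 2 + 1 from by omega, ← hb]
        exact LieSubalgebra.lie_mem _ ih.1 ih.2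
  obtain ⟨d, rfl⟩ : ∃ d, q = d + 1 := ⟨q - 1, by omega⟩
  exact (key d).1

theorem fib_genL (n : ℕ) (z : ℕ → Bool) :
    (t 0 * ∏ j ∈ Finset.Icc 1 n, if z j then t j else 1) • v (n + 4)
      ∈ LieSubalgebra.lieSpan k (Derivation k R R) {v 1, v 2} := by
  induction n with
  | zero =>
      have he : Finset.Icc 1 0 = ∅ := by simp
      rw [he, Finset.prod_empty, mul_one]
      have hb := fib_lie_vv t hext pd hpd v hrec hvlt hveq hvgt 1 3 (by omega) (by omega)
      have hp : (∏ m ∈ Finset.Ico (1 - 1) (3 - 2), t m) = t 0 := by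
        norm_num
      rw [hp] at hb
      rw [show (0:ℕ) + 4 = 3 + 1 from by omega, ← hb]
      exact LieSubalgebra.lie_mem _
        (fib_vmem t hsq hext pd hpd v hrec hvlt hveq hvgt 1 (by omega))
        (fib_vmem t hsq hext pd hpd v hrec hvlt hveq hvgt 3 (by omega))
  | succ n ih =>
      rw [Finset.prod_Icc_succ_top (by omega)]
      by_cases hz : z (n + 1)
      · rw [if_pos hz]
        have hb := fib_lie_fsmul (v (n + 2)) (v (n + 4))
          (t 0 * ∏ j ∈ Finset.Icc 1 n, if z j then t j else 1)
        rw [fib_vanish t hsq hext pd hpd v hrec hvlt hveq hvgt (n + 2) n z (by omega),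
          zero_smul, zero_add,
          fib_lie_vv t hext pd hpd v hrec hvlt hveq hvgt (n + 2) (n + 4) (by omega) (by omega)]
          at hb
        have hp : (∏ m ∈ Finset.Ico (n + 2 - 1) (n + 4 - 2), t m) = t (n + 1) := by
          rw [show n + 2 - 1 = n + 1 from rfl, show n + 4 - 2 = n + 2 from rfl,
            show n + 2 = (n + 1) + 1 from rfl, Nat.Ico_succ_singleton, Finset.prod_singleton]
        rw [hp, smul_smul] at hb
        rw [← mul_assoc, show n + 1 + 4 = n + 4 + 1 from by omega, ← hb]
        exact LieSubalgebra.lie_mem _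
          (fib_vmem t hsq hext pd hpd v hrec hvlt hveq hvgt (n + 2) (by omega)) ih
      · rw [if_neg hz, mul_one]
        have hb := fib_lie_fsmul (v (n + 3)) (v (n + 4))
          (t 0 * ∏ j ∈ Finset.Icc 1 n, if z j then t j else 1)
        rw [fib_vanish t hsq hext pd hpd v hrec hvlt hveq hvgt (n + 3) n z (by omega),
          zero_smul, zero_add,
          fib_lie_vv t hext pd hpd v hrec hvlt hveq hvgt (n + 3) (n + 4) (by omega) (by omega)]
          at hb
        have he : Finset.Ico (n + 3 - 1) (n + 4 - 2) = ∅ := Finset.Ico_eq_empty (by omega)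
        rw [he, Finset.prod_empty, one_smul] at hb
        rw [show n + 1 + 4 = n + 4 + 1 from by omega, ← hb]
        exact LieSubalgebra.lie_mem _
          (fib_vmem t hsq hext pd hpd v hrec hvlt hveq hvgt (n + 3) (by omega)) ih


theorem fib_sec (n : ℕ) (z : ℕ → Bool) :
    ((t 0 * ∏ j ∈ Finset.Icc 1 n, if z j then t j else 1) * ∏ m ∈ Finset.Ico 1 (n + 2), t m)
        • v (n + 4 + 1) ∈
      Submodule.span k {D : Derivation k R R | ∃ (n : ℕ) (z : ℕ → Bool),
        D = (t 0 * ∏ j ∈ Finset.Icc 1 n, if z j then t j else 1) • v (n + 4)} := by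
  classical
  by_cases hz : ∃ j ∈ Finset.Icc 1 n, z j = true
  · obtain ⟨j0, hj0, hzj⟩ := hz
    have hj0' := Finset.mem_Icc.mp hj0
    have hmem : j0 ∈ Finset.Ico 1 (n + 2) := Finset.mem_Ico.mpr ⟨hj0'.1, by omega⟩
    rw [← Finset.mul_prod_erase _ _ hj0, if_pos hzj, ← Finset.mul_prod_erase _ _ hmem]
    have key : ∀ a b : R, (t 0 * (t j0 * a)) * (t j0 * b) = (t j0 * t j0) * (t 0 * (a * b)) := by
      intro a b; ring
    rw [key, fib_tt t hsq hext pd hpd v hrec hvlt hveq hvgt j0, zero_mul, zero_smul]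
    exact Submodule.zero_mem _
  · push_neg at hz
    have hm : (∏ j ∈ Finset.Icc 1 n, if z j then t j else 1) = 1 :=
      Finset.prod_eq_one (fun j hj => by rw [if_neg (hz j hj)])
    rw [hm, mul_one]
    have hprod : (∏ m ∈ Finset.Ico 1 (n + 2), t m)
        = ∏ j ∈ Finset.Icc 1 (n + 1), if (fun _ => true : ℕ → Bool) j then t j else 1 := by
      rw [show n + 2 = n + 1 + 1 from rfl, Finset.Ico_add_one_right_eq_Icc]
      exact Finset.prod_congr rfl (fun _ _ => by simp)
    rw [hprod]
    exact Submodule.subset_span ⟨n + 1, fun _ => true, rfl⟩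

theorem fib_term (n : ℕ) (z : ℕ → Bool) (i : ℕ) (hi : i = 1 ∨ i = 2) (j : ℕ)
    (hj : j ∈ Finset.Icc 1 n) :
    (t 0 * (v i (if z j then t j else 1) * ∏ l ∈ (Finset.Icc 1 n).erase j,
        if z l then t l else 1)) • v (n + 4) ∈
      Submodule.span k {D : Derivation k R R | ∃ (n : ℕ) (z : ℕ → Bool),
        D = (t 0 * ∏ j ∈ Finset.Icc 1 n, if z j then t j else 1) • v (n + 4)} := by
  classical
  have hj' := Finset.mem_Icc.mp hj
  have hi1 : 1 ≤ i := by omega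
  by_cases hz : z j
  · rw [if_pos hz]
    rcases lt_trichotomy j i with h | h | h
    · rw [hvlt i j hi1 h, zero_mul, mul_zero, zero_smul]
      exact Submodule.zero_mem _
    · subst h
      rw [hveq j hi1, one_mul]
      have hpe : (∏ l ∈ Finset.Icc 1 n, if l = j then (1:R) else if z l then t l else 1)
          = ∏ l ∈ (Finset.Icc 1 n).erase j, (if z l then t l else 1) := by
        rw [← Finset.mul_prod_erase _ _ hj, if_pos rfl, one_mul]
        exact Finset.prod_congr rfl (fun l hl => if_neg (Finset.ne_of_mem_erase hl))
      rw [← hpe]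
      apply fib_memA t hsq hext pd hpd v hrec hvlt hveq hvgt n
      intro l hl
      by_cases h1 : l = j
      · right; left; rw [if_pos h1]
      · by_cases h2 : z l
        · left; rw [if_neg h1, if_pos h2]
        · right; left; rw [if_neg h1, if_neg h2]
    · rw [hvgt i j hi1 h]
      rcases hi with hi' | hi'
      · subst hi'
        rw [show (1:ℕ) - 1 = 0 from rfl,
          Finset.prod_eq_prod_Ico_succ_bot (show 0 < j - 1 from by omega)]
        have key : ∀ a b : R, t 0 * ((t 0 * a) * b) = (t 0 * t 0) * (a * b) := by
          intro a b; ring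
        rw [key, fib_tt t hsq hext pd hpd v hrec hvlt hveq hvgt 0, zero_mul, zero_smul]
        exact Submodule.zero_mem _
      · subst hi'
        rw [show (2:ℕ) - 1 = 1 from rfl]
        have h1 : (∏ l ∈ Finset.Icc 1 n, if l < j - 1 then t l else (1:R))
            = ∏ m ∈ Finset.Ico 1 (j - 1), t m := by
          rw [← Finset.prod_subset (show Finset.Ico 1 (j - 1) ⊆ Finset.Icc 1 n from by
            intro x hx
            have hx' := Finset.mem_Ico.mp hx
            exact Finset.mem_Icc.mpr ⟨hx'.1, by omega⟩)
            (fun x hx hnx => if_neg (fun hlt => hnx (Finset.mem_Ico.mpr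
              ⟨(Finset.mem_Icc.mp hx).1, hlt⟩)))]
          exact Finset.prod_congr rfl (fun l hl => if_pos (Finset.mem_Ico.mp hl).2)
        have h2 : (∏ l ∈ Finset.Icc 1 n, if l = j then (1:R) else if z l then t l else 1)
            = ∏ l ∈ (Finset.Icc 1 n).erase j, (if z l then t l else 1) := by
          rw [← Finset.mul_prod_erase _ _ hj, if_pos rfl, one_mul]
          exact Finset.prod_congr rfl (fun l hl => if_neg (Finset.ne_of_mem_erase hl))
        have h3 : (∏ m ∈ Finset.Ico 1 (j - 1), t m) * ∏ l ∈ (Finset.Icc 1 n).erase j,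
            (if z l then t l else 1)
            = ∏ l ∈ Finset.Icc 1 n, ((if l < j - 1 then t l else (1:R)) *
                (if l = j then (1:R) else if z l then t l else 1)) := by
          rw [Finset.prod_mul_distrib, h1, h2]
        rw [h3]
        apply fib_memA t hsq hext pd hpd v hrec hvlt hveq hvgt n
        intro l hl
        by_cases c1 : l < j - 1
        · by_cases c2 : l = j
          · rw [if_pos c1, if_pos c2, mul_one]; left; rfl
          · by_cases c3 : z l
            · rw [if_pos c1, if_neg c2, if_pos c3]
              right; right
              exact fib_tt t hsq hext pd hpd v hrec hvlt hveq hvgt l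
            · rw [if_pos c1, if_neg c2, if_neg c3, mul_one]; left; rfl
        · by_cases c2 : l = j
          · rw [if_neg c1, if_pos c2, mul_one]; right; left; rfl
          · by_cases c3 : z l
            · rw [if_neg c1, if_neg c2, if_pos c3, one_mul]; left; rfl
            · rw [if_neg c1, if_neg c2, if_neg c3, mul_one]; right; left; rfl
  · rw [if_neg hz, (v i).map_one_eq_zero, zero_mul, mul_zero, zero_smul]
    exact Submodule.zero_mem _

theorem fib_lieGen (i : ℕ) (hi : i = 1 ∨ i = 2) (n : ℕ) (z : ℕ → Bool) :
    ⁅v i, (t 0 * ∏ j ∈ Finset.Icc 1 n, if z j then t j else 1) • v (n + 4)⁆ ∈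
      Submodule.span k {D : Derivation k R R | ∃ (n : ℕ) (z : ℕ → Bool),
        D = (t 0 * ∏ j ∈ Finset.Icc 1 n, if z j then t j else 1) • v (n + 4)} := by
  classical
  have hi1 : 1 ≤ i := by omega
  rw [fib_lie_fsmul]
  apply Submodule.add_mem
  · rw [fib_vq_t0m t hsq hext pd hpd v hrec hvlt hveq hvgt i hi1, fib_dprod',
      Finset.mul_sum, Finset.sum_smul]
    exact Submodule.sum_mem _
      (fun j hj => fib_term t hsq hext pd hpd v hrec hvlt hveq hvgt n z i hi j hj)
  · rw [fib_lie_vv t hext pd hpd v hrec hvlt hveq hvgt i (n + 4) hi1 (by omega), smul_smul]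
    rcases hi with h | h
    · subst h
      rw [show (1:ℕ) - 1 = 0 from rfl,
        Finset.prod_eq_prod_Ico_succ_bot (show 0 < n + 4 - 2 from by omega)]
      have key : ∀ a b : R, (t 0 * a) * (t 0 * b) = (t 0 * t 0) * (a * b) := by
        intro a b; ring
      rw [key, fib_tt t hsq hext pd hpd v hrec hvlt hveq hvgt 0, zero_mul, zero_smul]
      exact Submodule.zero_mem _
    · subst h
      rw [show (2:ℕ) - 1 = 1 from rfl, show n + 4 - 2 = n + 2 from rfl]
      exact fib_sec t hsq hext pd hpd v hrec hvlt hveq hvgt n z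

theorem fib_abcore (p q : ℕ) (hp : 1 ≤ p) (hq : 1 ≤ q) (m m' : R) :
    ⁅(t 0 * m) • v p, (t 0 * m') • v q⁆ = 0 := by
  rw [fib_fsmul_lie, fib_lie_fsmul, Derivation.smul_apply, smul_eq_mul,
    fib_vq_t0m t hsq hext pd hpd v hrec hvlt hveq hvgt q hq m,
    fib_t0t0 t hsq hext pd hpd v hrec hvlt hveq hvgt m' (v q m), zero_smul, sub_zero,
    fib_vq_t0m t hsq hext pd hpd v hrec hvlt hveq hvgt p hp m',
    smul_add, smul_smul, smul_smul,
    fib_t0t0 t hsq hext pd hpd v hrec hvlt hveq hvgt m (v p m'),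
    fib_t0t0 t hsq hext pd hpd v hrec hvlt hveq hvgt m m', zero_smul, zero_smul, add_zero]

end FibAux3



/-- Let `A` be the `k`-linear span of the set
`X_A = { t₀ t₁^{z₁} ⋯ tₙ^{zₙ} v_{n+4} : n ≥ 0, zⱼ ∈ {0,1} }` of basis monomials of the
Fibonacci Lie algebra `L = ⟨v₁, v₂⟩` that contain the factor `t₀`.
Then `A` is an abelian ideal of `L`. -/
theorem fibonacci_abelian_ideal
    {k : Type} [Field k] [CharP k 2]
    {R : Type} [CommRing R] [Algebra k R]
    -- `R = k[t₀, t₁, …]/(tᵢ²)` is the ring of truncated polynomials: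
    (t : ℕ → R)
    (hsq : ∀ i, t i ^ 2 = 0)
    (hadj : Algebra.adjoin k (Set.range t) = ⊤)
    (hext : ∀ D D' : Derivation k R R, (∀ j, D (t j) = D' (t j)) → D = D')
    -- `pd i` is the partial derivative `∂ᵢ = ∂/∂tᵢ`:
    (pd : ℕ → Derivation k R R)
    (hpd : ∀ i j, pd i (t j) = if i = j then 1 else 0)
    -- `v i` are the pivot elements, defined recursively by `vᵢ = ∂ᵢ + t_{i-1} v_{i+1}`,
    -- i.e. the derivations `vᵢ = ∂ᵢ + t_{i-1}(∂_{i+1} + tᵢ(∂_{i+2} + ⋯))`: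
    (v : ℕ → Derivation k R R)
    (hrec : ∀ i, 1 ≤ i → v i = pd i + t (i - 1) • v (i + 1))
    (hvlt : ∀ i j, 1 ≤ i → j < i → v i (t j) = 0)
    (hveq : ∀ i, 1 ≤ i → v i (t i) = 1)
    (hvgt : ∀ i j, 1 ≤ i → i < j → v i (t j) = ∏ m ∈ Finset.Ico (i - 1) (j - 1), t m)
    : ∀ A : Submodule k (Derivation k R R),
        A = Submodule.span k
              {D | ∃ (n : ℕ) (z : ℕ → Bool),
                D = (t 0 * ∏ j ∈ Finset.Icc 1 n, if z j then t j else 1) • v (n + 4)} →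
        A ≤ (LieSubalgebra.lieSpan k (Derivation k R R) {v 1, v 2}).toSubmodule ∧
          (∀ x ∈ LieSubalgebra.lieSpan k (Derivation k R R) {v 1, v 2},
            ∀ a ∈ A, ⁅x, a⁆ ∈ A) ∧
          (∀ a ∈ A, ∀ b ∈ A, ⁅a, b⁆ = 0) := by
  intro A hA
  subst hA
  refine ⟨?_, ?_, ?_⟩
  · rw [Submodule.span_le]
    rintro D ⟨n, z, rfl⟩
    exact fib_genL t hsq hext pd hpd v hrec hvlt hveq hvgt n z
  · -- the ideal property
    set S : Submodule k (Derivation k R R) := Submodule.span k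
      {D | ∃ (n : ℕ) (z : ℕ → Bool),
        D = (t 0 * ∏ j ∈ Finset.Icc 1 n, if z j then t j else 1) • v (n + 4)} with hS
    let N : LieSubalgebra k (Derivation k R R) :=
      { carrier := {x | ∀ a ∈ S, ⁅x, a⁆ ∈ S}
        add_mem' := fun hx hy a ha => by
          rw [add_lie]; exact Submodule.add_mem S (hx a ha) (hy a ha)
        zero_mem' := fun a ha => by
          rw [zero_lie]; exact Submodule.zero_mem S
        smul_mem' := fun c x hx a ha => by
          rw [smul_lie]; exact Submodule.smul_mem S c (hx a ha)
        lie_mem' := fun {x y} hx hy a ha => by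
          rw [lie_lie]
          exact Submodule.sub_mem S (hx _ (hy a ha)) (hy _ (hx a ha)) }
    have hle : LieSubalgebra.lieSpan k (Derivation k R R) {v 1, v 2} ≤ N := by
      rw [LieSubalgebra.lieSpan_le]
      intro x hx
      have hgen : ∀ i, (i = 1 ∨ i = 2) → x = v i → x ∈ N := by
        intro i hi hxi
        subst hxi
        intro a ha
        refine Submodule.span_induction ?_ ?_ ?_ ?_ ha
        · rintro D ⟨n, z, rfl⟩
          exact fib_lieGen t hsq hext pd hpd v hrec hvlt hveq hvgt i hi n z
        · rw [lie_zero]; exact Submodule.zero_mem S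
        · intro u w _ _ hu hw
          rw [lie_add]; exact Submodule.add_mem S hu hw
        · intro c u _ hu
          rw [lie_smul]; exact Submodule.smul_mem S c hu
      rcases hx with hx | hx
      · exact hgen 1 (Or.inl rfl) hx
      · exact hgen 2 (Or.inr rfl) (by simpa using hx)
    exact fun x hx a ha => hle hx a ha
  · -- abelian
    intro a ha b hb
    have hgen : ∀ x : Derivation k R R,
        (∃ (n : ℕ) (z : ℕ → Bool),
          x = (t 0 * ∏ j ∈ Finset.Icc 1 n, if z j then t j else 1) • v (n + 4)) →
        ⁅x, b⁆ = 0 := by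
      rintro x ⟨n, z, rfl⟩
      refine Submodule.span_induction ?_ ?_ ?_ ?_ hb
      · rintro y ⟨n', z', rfl⟩
        exact fib_abcore t hsq hext pd hpd v hrec hvlt hveq hvgt (n + 4) (n' + 4)
          (by omega) (by omega) _ _
      · exact lie_zero _
      · intro u w _ _ hu hw
        rw [lie_add, hu, hw, add_zero]
      · intro c u _ hu
        rw [lie_smul, hu, smul_zero]
    refine Submodule.span_induction (fun x hx => hgen x hx) ?_ ?_ ?_ ha
    · exact zero_lie b
    · intro u w _ _ hu hw
      rw [add_lie, hu, hw, add_zero]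
    · intro c u _ hu
      rw [smul_lie, hu, smul_zero]
end

section
/- The shift map τ defined on generators by τ(t_i) = t_{i+1} and τ(∂_i) = ∂_{i+1} restricts to an injective Lie algebra homomorphism τ : L → L of the Fibonacci Lie algebra, with τ(v_i) = v_{i+1} for all i ≥ 1; moreover its image L_1 = τ(L) is the subalgebra generated by {v_2, v_3}. -/
open Finset
section Fib
variable {k : Type} [Field k]
variable {R : Type} [CommRing R] [Algebra k R]

def fibMon (t : ℕ → R) (S : Finset ℕ) : R := ∏ i ∈ S, t i

variable (t : ℕ → R)


theorem fibMon_mul_disjoint {S T : Finset ℕ} (h : Disjoint S T) :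
    fibMon t S * fibMon t T = fibMon t (S ∪ T) :=
  (Finset.prod_union h).symm

theorem fibMon_mul_nondisj (hsq : ∀ i, t i ^ 2 = 0) {S T : Finset ℕ}
    (h : ¬ Disjoint S T) : fibMon t S * fibMon t T = 0 := by
  rw [Finset.not_disjoint_iff] at h
  obtain ⟨i, hiS, hiT⟩ := h
  unfold fibMon
  rw [← Finset.mul_prod_erase _ _ hiS, ← Finset.mul_prod_erase _ _ hiT]
  have h2 : (t i * ∏ x ∈ S.erase i, t x) * (t i * ∏ x ∈ T.erase i, t x)
      = t i ^ 2 * ((∏ x ∈ S.erase i, t x) * ∏ x ∈ T.erase i, t x) := by ring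
  rw [h2, hsq i, zero_mul]

theorem fib_deriv_prod (D : Derivation k R R) (S : Finset ℕ) :
    D (∏ i ∈ S, t i) = ∑ i ∈ S, D (t i) * ∏ j ∈ S.erase i, t j := by
  classical
  induction S using Finset.induction_on with
  | empty => simp
  | @insert a S ha ih =>
    rw [Finset.prod_insert ha, Derivation.leibniz, smul_eq_mul, smul_eq_mul, ih,
      Finset.sum_insert ha, Finset.erase_insert ha]
    have h2 : ∑ i ∈ S, D (t i) * ∏ j ∈ (insert a S).erase i, t j
        = t a * ∑ i ∈ S, D (t i) * ∏ j ∈ S.erase i, t j := by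
      rw [Finset.mul_sum]
      apply Finset.sum_congr rfl
      intro i hi
      have hne : a ≠ i := fun h => ha (h ▸ hi)
      rw [Finset.erase_insert_of_ne hne,
        Finset.prod_insert (fun h => ha (Finset.mem_of_mem_erase h))]
      ring
    rw [h2]
    ring

theorem fib_pd_mon (pd : ℕ → Derivation k R R)
    (hpd : ∀ i j, pd i (t j) = if i = j then 1 else 0)
    {N : ℕ} {S : Finset ℕ} (hN : N ∉ S) : pd N (fibMon t S) = 0 := by
  rw [fibMon, fib_deriv_prod]
  apply Finset.sum_eq_zero
  intro i hi
  have : N ≠ i := fun h => hN (h ▸ hi)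
  rw [hpd, if_neg this, zero_mul]

theorem fib_indep_aux [Nontrivial R] (pd : ℕ → Derivation k R R)
    (hpd : ∀ i j, pd i (t j) = if i = j then 1 else 0) (N : ℕ) :
    ∀ c : Finset ℕ → k, (∑ S ∈ (Finset.range N).powerset, c S • fibMon t S) = 0 →
      ∀ S ∈ (Finset.range N).powerset, c S = 0 := by
  classical
  induction N with
  | zero =>
    intro c hc S hS
    simp only [Finset.range_zero, Finset.powerset_empty, Finset.sum_singleton] at hc
    simp only [Finset.range_zero, Finset.powerset_empty, Finset.mem_singleton] at hS
    subst hS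
    have h1 : fibMon t (∅ : Finset ℕ) = (1 : R) := by simp [fibMon]
    rw [h1] at hc
    rcases smul_eq_zero.mp hc with h | h
    · exact h
    · exact absurd h one_ne_zero
  | succ N ih =>
    intro c hc
    have hrange : Finset.range (N + 1) = insert N (Finset.range N) := Finset.range_add_one
    have hdisj : Disjoint (Finset.range N).powerset
        (((Finset.range N).powerset).image (insert N)) := by
      rw [Finset.disjoint_left]
      intro S hS hS'
      obtain ⟨T, hT, rfl⟩ := Finset.mem_image.mp hS'
      have : N ∈ insert N T := Finset.mem_insert_self _ _
      have : N ∈ Finset.range N := (Finset.mem_powerset.mp hS) this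
      exact absurd this (by simp)
    have hinj : ∀ x ∈ (Finset.range N).powerset, ∀ y ∈ (Finset.range N).powerset,
        insert N x = insert N y → x = y := by
      intro x hx y hy hxy
      have hxN : N ∉ x := fun h => by simpa using (Finset.mem_powerset.mp hx) h
      have hyN : N ∉ y := fun h => by simpa using (Finset.mem_powerset.mp hy) h
      have := congrArg (fun s => Finset.erase s N) hxy
      simpa [Finset.erase_insert hxN, Finset.erase_insert hyN] using this
    rw [hrange, Finset.powerset_insert, Finset.sum_union hdisj,
      Finset.sum_image hinj] at hc
    -- rewrite monomials of inserted sets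
    have hmon : ∀ S ∈ (Finset.range N).powerset,
        c (insert N S) • fibMon t (insert N S) = c (insert N S) • (t N * fibMon t S) := by
      intro S hS
      have hNS : N ∉ S := fun h => by simpa using (Finset.mem_powerset.mp hS) h
      rw [fibMon, Finset.prod_insert hNS]; rfl
    rw [Finset.sum_congr rfl hmon] at hc
    -- apply pd N to the equation
    have hc2 := congrArg (pd N) hc
    rw [map_add, map_sum, map_sum, map_zero] at hc2
    have e1 : ∀ S ∈ (Finset.range N).powerset, pd N (c S • fibMon t S) = 0 := by
      intro S hS
      have hNS : N ∉ S := fun h => by simpa using (Finset.mem_powerset.mp hS) h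
      rw [Derivation.map_smul, fib_pd_mon t pd hpd hNS, smul_zero]
    have e2 : ∀ S ∈ (Finset.range N).powerset,
        pd N (c (insert N S) • (t N * fibMon t S)) = c (insert N S) • fibMon t S := by
      intro S hS
      have hNS : N ∉ S := fun h => by simpa using (Finset.mem_powerset.mp hS) h
      rw [Derivation.map_smul, Derivation.leibniz, smul_eq_mul, smul_eq_mul,
        fib_pd_mon t pd hpd hNS, hpd, if_pos rfl, mul_zero, mul_one, zero_add]
    rw [Finset.sum_congr rfl e1, Finset.sum_congr rfl e2, Finset.sum_const_zero, zero_add] at hc2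
    have hins : ∀ S ∈ (Finset.range N).powerset, c (insert N S) = 0 :=
      ih (fun S => c (insert N S)) hc2
    -- now the second sum in hc vanishes
    have e3 : ∀ S ∈ (Finset.range N).powerset,
        c (insert N S) • (t N * fibMon t S) = 0 := by
      intro S hS; rw [hins S hS, zero_smul]
    rw [Finset.sum_congr rfl e3, Finset.sum_const_zero, add_zero] at hc
    have hbase := ih c hc
    intro S hS
    rw [hrange, Finset.powerset_insert, Finset.mem_union] at hS
    rcases hS with hS | hS
    · exact hbase S hS
    · obtain ⟨T, hT, rfl⟩ := Finset.mem_image.mp hS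
      exact hins T hT

theorem fib_linearIndependent [Nontrivial R] (pd : ℕ → Derivation k R R)
    (hpd : ∀ i j, pd i (t j) = if i = j then 1 else 0) :
    LinearIndependent k (fibMon t) := by
  classical
  rw [linearIndependent_iff']
  intro s g hg i hi
  set N : ℕ := s.sup (fun S => S.sup Nat.succ) with hN
  have hsub : ∀ S ∈ s, S ∈ (Finset.range N).powerset := by
    intro S hS
    rw [Finset.mem_powerset]
    intro x hx
    rw [Finset.mem_range]
    calc x < x.succ := Nat.lt_succ_self x
    _ ≤ S.sup Nat.succ := Finset.le_sup hx
    _ ≤ N := Finset.le_sup hS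
  set c : Finset ℕ → k := fun S => if S ∈ s then g S else 0 with hc
  have hsum : ∑ S ∈ (Finset.range N).powerset, c S • fibMon t S
      = ∑ S ∈ s, g S • fibMon t S := by
    rw [← Finset.sum_subset (fun S hS => hsub S hS)]
    · apply Finset.sum_congr rfl
      intro S hS
      rw [hc]; simp [hS]
    · intro S _ hS
      rw [hc]; simp [hS]
  have := fib_indep_aux t pd hpd N c (by rw [hsum]; exact hg) i (hsub i hi)
  rw [hc] at this
  simpa [hi] using this

theorem fib_span_top (hsq : ∀ i, t i ^ 2 = 0)
    (hadj : Algebra.adjoin k (Set.range t) = ⊤) :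
    ⊤ ≤ Submodule.span k (Set.range (fibMon t)) := by
  classical
  intro x _
  have hx : x ∈ Subalgebra.toSubmodule (Algebra.adjoin k (Set.range t)) := by
    rw [hadj]; trivial
  rw [Algebra.adjoin_eq_span] at hx
  refine Submodule.span_le.mpr ?_ hx
  intro y hy
  have key : y ∈ Set.range (fibMon t) ∪ {0} := by
    induction hy using Submonoid.closure_induction with
    | mem z hz =>
      obtain ⟨i, rfl⟩ := hz
      left
      exact ⟨{i}, by simp [fibMon]⟩
    | one =>
      left; exact ⟨∅, by simp [fibMon]⟩
    | mul a b _ _ ha hb =>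
      rcases ha with ⟨S, rfl⟩ | ha
      · rcases hb with ⟨T, rfl⟩ | hb
        · by_cases hd : Disjoint S T
          · left; exact ⟨S ∪ T, (fibMon_mul_disjoint t hd).symm⟩
          · right; simp [fibMon_mul_nondisj t hsq hd]
        · right; simp only [Set.mem_singleton_iff] at hb; simp [hb]
      · right; simp only [Set.mem_singleton_iff] at ha; simp [ha]
  rcases key with ⟨S, rfl⟩ | hy0
  · exact Submodule.subset_span ⟨S, rfl⟩
  · simp only [Set.mem_singleton_iff] at hy0; simp [hy0]

/-- index shift on finsets -/
def fibShift (S : Finset ℕ) : Finset ℕ := S.map (addRightEmbedding 1)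

theorem fibShift_injective : Function.Injective fibShift :=
  Finset.map_injective _

theorem fibShift_union (S T : Finset ℕ) :
    fibShift (S ∪ T) = fibShift S ∪ fibShift T := Finset.map_union _ _

theorem fibShift_disjoint {S T : Finset ℕ} :
    Disjoint (fibShift S) (fibShift T) ↔ Disjoint S T := Finset.disjoint_map _

theorem fibShift_empty : fibShift ∅ = ∅ := rfl

theorem fibShift_singleton (j : ℕ) : fibShift {j} = {j + 1} := by
  simp [fibShift, addRightEmbedding]

theorem fibShift_Ico (a b : ℕ) : fibShift (Finset.Ico a b) = Finset.Ico (a + 1) (b + 1) :=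
  Finset.map_add_right_Ico a b 1

theorem fib_bracket_v12 (hsq : ∀ i, t i ^ 2 = 0)
    (hext : ∀ D D' : Derivation k R R, (∀ j, D (t j) = D' (t j)) → D = D')
    (v : ℕ → Derivation k R R)
    (hvlt : ∀ i j, 1 ≤ i → j < i → v i (t j) = 0)
    (hveq : ∀ i, 1 ≤ i → v i (t i) = 1)
    (hvgt : ∀ i j, 1 ≤ i → i < j → v i (t j) = ∏ m ∈ Finset.Ico (i - 1) (j - 1), t m) :
    ⁅v 1, v 2⁆ = v 3 := by
  apply hext
  intro j
  rw [Derivation.commutator_apply]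
  match j with
  | 0 =>
    rw [hvlt 2 0 (by omega) (by omega), hvlt 1 0 (by omega) (by omega), map_zero, map_zero,
      hvlt 3 0 (by omega) (by omega), sub_zero]
  | 1 =>
    rw [hvlt 2 1 (by omega) (by omega), map_zero, hveq 1 (by omega),
      Derivation.map_one_eq_zero, hvlt 3 1 (by omega) (by omega), sub_zero]
  | 2 =>
    rw [hveq 2 (by omega), Derivation.map_one_eq_zero, hvgt 1 2 (by omega) (by omega)]
    have h1 : Finset.Ico (1 - 1) (2 - 1) = {0} := rfl
    rw [h1, Finset.prod_singleton, hvlt 2 0 (by omega) (by omega),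
      hvlt 3 2 (by omega) (by omega), zero_sub, neg_zero]
  | 3 =>
    rw [hvgt 2 3 (by omega) (by omega), hvgt 1 3 (by omega) (by omega)]
    have h1 : Finset.Ico (2 - 1) (3 - 1) = {1} := rfl
    rw [h1, Finset.prod_singleton, hveq 1 (by omega)]
    have h2 : v 2 (∏ m ∈ Finset.Ico (1 - 1) (3 - 1), t m) = 0 := by
      rw [fib_deriv_prod]
      apply Finset.sum_eq_zero
      intro i hi
      have : i = 0 ∨ i = 1 := by
        simp only [Finset.mem_Ico] at hi
        omega
      rcases this with rfl | rfl
      · rw [hvlt 2 0 (by omega) (by omega), zero_mul]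
      · rw [hvlt 2 1 (by omega) (by omega), zero_mul]
    rw [h2, hveq 3 (by omega), sub_zero]
  | (n + 4) =>
    set j := n + 4 with hj
    have hj1 : j - 1 = n + 3 := rfl
    -- useful set identities
    have e1 : Finset.Ico 1 (n + 3) = insert 1 (insert 2 (Finset.Ico 3 (n + 3))) := by
      ext x
      simp only [Finset.mem_Ico, Finset.mem_insert]
      omega
    have e2 : Finset.Ico 2 (n + 3) = insert 2 (Finset.Ico 3 (n + 3)) := by
      ext x
      simp only [Finset.mem_Ico, Finset.mem_insert]
      omega
    have e0 : Finset.Ico 0 (n + 3) = insert 0 (insert 1 (insert 2 (Finset.Ico 3 (n + 3)))) := by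
      ext x
      simp only [Finset.mem_Ico, Finset.mem_insert]
      omega
    have hm1 : (1 : ℕ) ∉ insert 2 (Finset.Ico 3 (n + 3)) := by
      simp only [Finset.mem_insert, Finset.mem_Ico]
      omega
    have hm2 : (2 : ℕ) ∉ Finset.Ico 3 (n + 3) := by
      simp only [Finset.mem_Ico]
      omega
    have hA : v 1 (v 2 (t j)) = fibMon t (Finset.Ico 2 (n + 3))
        + fibMon t (insert 0 (insert 1 (Finset.Ico 3 (n + 3)))) := by
      rw [hvgt 2 j (by omega) (by omega)]
      have : (∏ m ∈ Finset.Ico (2 - 1) (j - 1), t m) = ∏ m ∈ Finset.Ico 1 (n + 3), t m := by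
        norm_num [hj1]
      rw [this, fib_deriv_prod]
      rw [e1, Finset.sum_insert hm1, Finset.sum_insert hm2]
      have t1 : v 1 (t 1) * ∏ x ∈ (insert 1 (insert 2 (Finset.Ico 3 (n + 3)))).erase 1, t x
          = fibMon t (Finset.Ico 2 (n + 3)) := by
        rw [hveq 1 (by omega), one_mul, Finset.erase_insert hm1, e2]
        rfl
      have t2 : v 1 (t 2) * ∏ x ∈ (insert 1 (insert 2 (Finset.Ico 3 (n + 3)))).erase 2, t x
          = fibMon t (insert 0 (insert 1 (Finset.Ico 3 (n + 3)))) := by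
        rw [hvgt 1 2 (by omega) (by omega)]
        have h1 : Finset.Ico (1 - 1) (2 - 1) = {0} := rfl
        have h2 : (insert 1 (insert 2 (Finset.Ico 3 (n + 3)))).erase 2
            = insert 1 (Finset.Ico 3 (n + 3)) := by
          ext x
          simp only [Finset.mem_erase, Finset.mem_insert, Finset.mem_Ico]
          omega
        rw [h1, h2]
        have h3 : (∏ m ∈ ({0} : Finset ℕ), t m) = fibMon t {0} := rfl
        have h4 : (∏ x ∈ insert 1 (Finset.Ico 3 (n + 3)), t x)
            = fibMon t (insert 1 (Finset.Ico 3 (n + 3))) := rfl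
        have hd5 : Disjoint ({0} : Finset ℕ) (insert 1 (Finset.Ico 3 (n + 3))) := by
          simp only [Finset.disjoint_left, Finset.mem_singleton, Finset.mem_insert,
            Finset.mem_Ico]
          omega
        have hu5 : ({0} : Finset ℕ) ∪ insert 1 (Finset.Ico 3 (n + 3))
            = insert 0 (insert 1 (Finset.Ico 3 (n + 3))) := by
          ext x
          simp only [Finset.mem_union, Finset.mem_singleton, Finset.mem_insert, Finset.mem_Ico]
          try tauto
        rw [h3, h4, fibMon_mul_disjoint t hd5, hu5]
      have t3 : ∑ i ∈ Finset.Ico 3 (n + 3),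
          v 1 (t i) * ∏ x ∈ (insert 1 (insert 2 (Finset.Ico 3 (n + 3)))).erase i, t x = 0 := by
        apply Finset.sum_eq_zero
        intro i hi
        simp only [Finset.mem_Ico] at hi
        rw [hvgt 1 i (by omega) (by omega)]
        have h1 : (∏ m ∈ Finset.Ico (1 - 1) (i - 1), t m) = fibMon t (Finset.Ico 0 (i - 1)) := rfl
        have h2 : (∏ x ∈ (insert 1 (insert 2 (Finset.Ico 3 (n + 3)))).erase i, t x)
            = fibMon t ((insert 1 (insert 2 (Finset.Ico 3 (n + 3)))).erase i) := rfl
        rw [h1, h2, fibMon_mul_nondisj t hsq]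
        rw [Finset.not_disjoint_iff]
        refine ⟨1, ?_, ?_⟩
        · simp only [Finset.mem_Ico]; omega
        · simp only [Finset.mem_erase, Finset.mem_insert, Finset.mem_Ico, true_or, or_true,
            and_true]
          omega
      rw [t1, t2, t3, add_zero]
    have hB : v 2 (v 1 (t j)) = fibMon t (insert 0 (insert 1 (Finset.Ico 3 (n + 3)))) := by
      rw [hvgt 1 j (by omega) (by omega)]
      have : (∏ m ∈ Finset.Ico (1 - 1) (j - 1), t m) = ∏ m ∈ Finset.Ico 0 (n + 3), t m := by
        norm_num [hj1]
      rw [this, fib_deriv_prod]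
      rw [e0, Finset.sum_insert (by simp [Finset.mem_insert, Finset.mem_Ico]),
        Finset.sum_insert (by simp [Finset.mem_insert, Finset.mem_Ico]),
        Finset.sum_insert (by simp [Finset.mem_Ico])]
      rw [hvlt 2 0 (by omega) (by omega), zero_mul, hvlt 2 1 (by omega) (by omega), zero_mul]
      have t2 : v 2 (t 2) * ∏ x ∈ (insert 0 (insert 1 (insert 2 (Finset.Ico 3 (n + 3))))).erase 2, t x
          = fibMon t (insert 0 (insert 1 (Finset.Ico 3 (n + 3)))) := by
        rw [hveq 2 (by omega), one_mul]
        congr 1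
        ext x
        simp only [Finset.mem_erase, Finset.mem_insert, Finset.mem_Ico]
        omega
      have t3 : ∑ i ∈ Finset.Ico 3 (n + 3),
          v 2 (t i) * ∏ x ∈ (insert 0 (insert 1 (insert 2 (Finset.Ico 3 (n + 3))))).erase i, t x
          = 0 := by
        apply Finset.sum_eq_zero
        intro i hi
        simp only [Finset.mem_Ico] at hi
        rw [hvgt 2 i (by omega) (by omega)]
        have h1 : (∏ m ∈ Finset.Ico (2 - 1) (i - 1), t m) = fibMon t (Finset.Ico 1 (i - 1)) := rfl
        have h2 : (∏ x ∈ (insert 0 (insert 1 (insert 2 (Finset.Ico 3 (n + 3))))).erase i, t x)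
            = fibMon t ((insert 0 (insert 1 (insert 2 (Finset.Ico 3 (n + 3))))).erase i) := rfl
        rw [h1, h2, fibMon_mul_nondisj t hsq]
        rw [Finset.not_disjoint_iff]
        refine ⟨1, ?_, ?_⟩
        · simp only [Finset.mem_Ico]; omega
        · simp only [Finset.mem_erase, Finset.mem_insert, Finset.mem_Ico, true_or, or_true,
            and_true]
          omega
      rw [t2, t3, add_zero, zero_add, zero_add]
    rw [hA, hB, add_sub_cancel_right, hvgt 3 j (by omega) (by omega)]
    have : Finset.Ico (3 - 1) (j - 1) = Finset.Ico 2 (n + 3) := by norm_num [hj1]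
    rw [this]
    rfl

section Sigma

variable [Nontrivial R] (hsq : ∀ i, t i ^ 2 = 0)
    (hadj : Algebra.adjoin k (Set.range t) = ⊤)
    (pd : ℕ → Derivation k R R)
    (hpd : ∀ i j, pd i (t j) = if i = j then 1 else 0)

/-- basis of monomials -/
noncomputable def fibBasis : Module.Basis (Finset ℕ) k R :=
  Module.Basis.mk (fib_linearIndependent t pd hpd) (fib_span_top t hsq hadj)

theorem fibBasis_apply (S : Finset ℕ) : fibBasis t hsq hadj pd hpd S = fibMon t S :=
  Module.Basis.mk_apply _ _ _

/-- the shift σ as a linear map -/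
noncomputable def fibSigmaLin : R →ₗ[k] R :=
  (fibBasis t hsq hadj pd hpd).constr k (fun S => fibMon t (fibShift S))

theorem fibSigmaLin_mon (S : Finset ℕ) :
    fibSigmaLin t hsq hadj pd hpd (fibMon t S) = fibMon t (fibShift S) := by
  rw [← fibBasis_apply t hsq hadj pd hpd S]
  exact Module.Basis.constr_basis _ _ _ _

theorem fibSigmaLin_mon_mul (S T : Finset ℕ) :
    fibSigmaLin t hsq hadj pd hpd (fibMon t S * fibMon t T)
      = fibSigmaLin t hsq hadj pd hpd (fibMon t S)
        * fibSigmaLin t hsq hadj pd hpd (fibMon t T) := by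
  rw [fibSigmaLin_mon, fibSigmaLin_mon]
  by_cases hd : Disjoint S T
  · rw [fibMon_mul_disjoint t hd, fibSigmaLin_mon, fibShift_union,
      fibMon_mul_disjoint t (fibShift_disjoint.mpr hd)]
  · rw [fibMon_mul_nondisj t hsq hd, map_zero,
      fibMon_mul_nondisj t hsq (fun h => hd (fibShift_disjoint.mp h))]

theorem fibSigmaLin_mul (x y : R) :
    fibSigmaLin t hsq hadj pd hpd (x * y)
      = fibSigmaLin t hsq hadj pd hpd x * fibSigmaLin t hsq hadj pd hpd y := by
  set σ := fibSigmaLin t hsq hadj pd hpd with hσ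
  have key : ∀ S : Finset ℕ, ∀ y : R, σ (fibMon t S * y) = σ (fibMon t S) * σ y := by
    intro S
    have h : σ.comp (LinearMap.mulLeft k (fibMon t S))
        = (LinearMap.mulLeft k (σ (fibMon t S))).comp σ := by
      apply Module.Basis.ext (fibBasis t hsq hadj pd hpd)
      intro T
      simp only [LinearMap.comp_apply, LinearMap.mulLeft_apply, fibBasis_apply]
      exact fibSigmaLin_mon_mul t hsq hadj pd hpd S T
    intro y
    have := DFunLike.congr_fun h y
    simpa using this
  have h : σ.comp (LinearMap.mulRight k y)
      = (LinearMap.mulRight k (σ y)).comp σ := by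
    apply Module.Basis.ext (fibBasis t hsq hadj pd hpd)
    intro S
    simp only [LinearMap.comp_apply, LinearMap.mulRight_apply, fibBasis_apply]
    exact key S y
  have := DFunLike.congr_fun h x
  simpa using this

theorem fibSigmaLin_one : fibSigmaLin t hsq hadj pd hpd 1 = 1 := by
  have h1 : (1 : R) = fibMon t ∅ := by simp [fibMon]
  rw [h1, fibSigmaLin_mon, fibShift_empty]

/-- the shift σ as an algebra homomorphism -/
noncomputable def fibSigma : R →ₐ[k] R :=
  AlgHom.ofLinearMap (fibSigmaLin t hsq hadj pd hpd)
    (fibSigmaLin_one t hsq hadj pd hpd) (fibSigmaLin_mul t hsq hadj pd hpd)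

theorem fibSigma_mon (S : Finset ℕ) :
    fibSigma t hsq hadj pd hpd (fibMon t S) = fibMon t (fibShift S) :=
  fibSigmaLin_mon t hsq hadj pd hpd S

theorem fibSigma_t (j : ℕ) : fibSigma t hsq hadj pd hpd (t j) = t (j + 1) := by
  have h1 : t j = fibMon t {j} := by simp [fibMon]
  have h2 : t (j + 1) = fibMon t {j + 1} := by simp [fibMon]
  rw [h1, h2, fibSigma_mon, fibShift_singleton]

theorem fibSigma_injective : Function.Injective (fibSigma t hsq hadj pd hpd) := by
  set σ := fibSigma t hsq hadj pd hpd with hσ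
  set b := fibBasis t hsq hadj pd hpd with hb
  have li2 : LinearIndependent k (fibMon t ∘ fibShift) :=
    (fib_linearIndependent t pd hpd).comp fibShift fibShift_injective
  have key : ∀ x : R, σ x = 0 → x = 0 := by
    intro x hx0
    have hx : ∑ S ∈ (b.repr x).support, (b.repr x) S • b S = x := by
      conv_rhs => rw [← b.linearCombination_repr x]
      rw [Finsupp.linearCombination_apply, Finsupp.sum]
    have h0 : ∑ S ∈ (b.repr x).support, (b.repr x) S • (fibMon t ∘ fibShift) S = 0 := by
      have : σ (∑ S ∈ (b.repr x).support, (b.repr x) S • b S) = 0 := by rw [hx]; exact hx0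
      rw [map_sum] at this
      rw [← this]
      apply Finset.sum_congr rfl
      intro S _
      rw [map_smul]
      congr 1
      show (fibMon t ∘ fibShift) S = σ (b S)
      rw [Function.comp_apply, hσ, hb, fibBasis_apply, fibSigma_mon]
    have hz := linearIndependent_iff'.mp li2 (b.repr x).support (b.repr x) h0
    rw [← hx]
    apply Finset.sum_eq_zero
    intro S hS
    rw [hz S hS, zero_smul]
  intro x y hxy
  have : σ (x - y) = 0 := by rw [map_sub, hxy, sub_self]
  exact sub_eq_zero.mp (key _ this)

/-- coefficient sequence of the shifted derivation -/
noncomputable def fibC (D : Derivation k R R) : ℕ → R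
  | 0 => 0
  | (j+1) => fibSigma t hsq hadj pd hpd (D (t j))

/-- the shifted derivation, as a linear map defined on the monomial basis -/
noncomputable def fibTauRaw (D : Derivation k R R) : R →ₗ[k] R :=
  (fibBasis t hsq hadj pd hpd).constr k
    (fun S => ∑ i ∈ S, fibC t hsq hadj pd hpd D i * fibMon t (S.erase i))

theorem fibTauRaw_mon (D : Derivation k R R) (S : Finset ℕ) :
    fibTauRaw t hsq hadj pd hpd D (fibMon t S)
      = ∑ i ∈ S, fibC t hsq hadj pd hpd D i * fibMon t (S.erase i) := by
  rw [← fibBasis_apply t hsq hadj pd hpd S]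
  exact Module.Basis.constr_basis _ _ _ _

theorem fibTauRaw_mon_mul (hchar : (2 : R) = 0) (D : Derivation k R R) (S T : Finset ℕ) :
    fibTauRaw t hsq hadj pd hpd D (fibMon t S * fibMon t T)
      = fibMon t S * fibTauRaw t hsq hadj pd hpd D (fibMon t T)
        + fibTauRaw t hsq hadj pd hpd D (fibMon t S) * fibMon t T := by
  classical
  set c := fibC t hsq hadj pd hpd D with hc
  rw [fibTauRaw_mon, fibTauRaw_mon, Finset.mul_sum, Finset.sum_mul]
  have hTterm : ∀ i : ℕ, fibMon t S * (c i * fibMon t (T.erase i))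
      = c i * (fibMon t S * fibMon t (T.erase i)) := fun i => by ring
  have hSterm : ∀ i : ℕ, c i * fibMon t (S.erase i) * fibMon t T
      = c i * (fibMon t (S.erase i) * fibMon t T) := fun i => by ring
  simp only [← hc, hTterm, hSterm]
  by_cases hd : Disjoint S T
  · -- disjoint case: genuine Leibniz expansion
    rw [fibMon_mul_disjoint t hd, fibTauRaw_mon, Finset.sum_union hd]
    have h1 : ∀ i ∈ T, c i * fibMon t ((S ∪ T).erase i)
        = c i * (fibMon t S * fibMon t (T.erase i)) := by
      intro i hi
      have hiS : i ∉ S := fun h => (Finset.disjoint_left.mp hd h) hi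
      have hd2 : Disjoint S (T.erase i) :=
        Finset.disjoint_of_subset_right (Finset.erase_subset _ _) hd
      rw [fibMon_mul_disjoint t hd2]
      congr 2
      rw [Finset.erase_union_distrib, Finset.erase_eq_of_notMem hiS]
    have h2 : ∀ i ∈ S, c i * fibMon t ((S ∪ T).erase i)
        = c i * (fibMon t (S.erase i) * fibMon t T) := by
      intro i hi
      have hiT : i ∉ T := fun h => (Finset.disjoint_left.mp hd hi) h
      have hd2 : Disjoint (S.erase i) T :=
        Finset.disjoint_of_subset_left (Finset.erase_subset _ _) hd
      rw [fibMon_mul_disjoint t hd2]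
      congr 2
      rw [Finset.erase_union_distrib, Finset.erase_eq_of_notMem hiT]
    rw [Finset.sum_congr rfl h1, Finset.sum_congr rfl h2, add_comm]
  · -- non-disjoint case: everything vanishes (char 2)
    rw [fibMon_mul_nondisj t hsq hd, map_zero]
    have hne : (S ∩ T).Nonempty := Finset.not_disjoint_iff_nonempty_inter.mp hd
    by_cases hsing : ∃ i0, S ∩ T = {i0}
    · obtain ⟨i0, hi0⟩ := hsing
      have hi0ST : i0 ∈ S ∩ T := by rw [hi0]; exact Finset.mem_singleton_self i0
      have hi0S : i0 ∈ S := Finset.mem_of_mem_inter_left hi0ST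
      have hi0T : i0 ∈ T := Finset.mem_of_mem_inter_right hi0ST
      have hT : ∑ i ∈ T, c i * (fibMon t S * fibMon t (T.erase i))
          = c i0 * fibMon t (S ∪ T) := by
        rw [Finset.sum_eq_single i0]
        · have hd2 : Disjoint S (T.erase i0) := by
            rw [Finset.disjoint_iff_inter_eq_empty, Finset.inter_erase, hi0,
              Finset.erase_singleton]
          rw [fibMon_mul_disjoint t hd2]
          congr 2
          ext x
          simp only [Finset.mem_union, Finset.mem_erase]
          constructor
          · rintro (h | ⟨-, h⟩)
            · exact Or.inl h
            · exact Or.inr h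
          · intro h
            by_cases hx : x = i0
            · exact Or.inl (hx ▸ hi0S)
            · rcases h with h | h
              · exact Or.inl h
              · exact Or.inr ⟨hx, h⟩
        · intro i hiT hne2
          have : ¬ Disjoint S (T.erase i) := by
            rw [Finset.not_disjoint_iff]
            exact ⟨i0, hi0S, Finset.mem_erase.mpr ⟨fun h => hne2 h.symm, hi0T⟩⟩
          rw [fibMon_mul_nondisj t hsq this, mul_zero]
        · intro h; exact absurd hi0T h
      have hS : ∑ i ∈ S, c i * (fibMon t (S.erase i) * fibMon t T)
          = c i0 * fibMon t (S ∪ T) := by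
        rw [Finset.sum_eq_single i0]
        · have hd2 : Disjoint (S.erase i0) T := by
            rw [Finset.disjoint_iff_inter_eq_empty, Finset.erase_inter, hi0,
              Finset.erase_singleton]
          rw [fibMon_mul_disjoint t hd2]
          congr 2
          ext x
          simp only [Finset.mem_union, Finset.mem_erase]
          constructor
          · rintro (⟨-, h⟩ | h)
            · exact Or.inl h
            · exact Or.inr h
          · intro h
            by_cases hx : x = i0
            · exact Or.inr (hx ▸ hi0T)
            · rcases h with h | h
              · exact Or.inl ⟨hx, h⟩
              · exact Or.inr h
        · intro i hiS hne2
          have : ¬ Disjoint (S.erase i) T := by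
            rw [Finset.not_disjoint_iff]
            exact ⟨i0, Finset.mem_erase.mpr ⟨fun h => hne2 h.symm, hi0S⟩, hi0T⟩
          rw [fibMon_mul_nondisj t hsq this, mul_zero]
        · intro h; exact absurd hi0S h
      rw [hT, hS, ← two_mul, ← mul_assoc, mul_comm (2 : R) (c i0), mul_assoc,
        ← mul_assoc]
      rw [show c i0 * 2 = 2 * c i0 from mul_comm _ _, hchar, zero_mul, zero_mul]
    · have hT : ∀ i ∈ T, c i * (fibMon t S * fibMon t (T.erase i)) = 0 := by
        intro i hi
        have : ¬ Disjoint S (T.erase i) := by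
          intro hdis
          rw [Finset.disjoint_iff_inter_eq_empty, Finset.inter_erase] at hdis
          have : S ∩ T ⊆ {i} := by
            intro x hx
            by_cases hxi : x = i
            · simp [hxi]
            · exact absurd (Finset.mem_erase.mpr ⟨hxi, hx⟩) (by rw [hdis]; simp)
          rcases Finset.subset_singleton_iff.mp this with h | h
          · exact absurd h (Finset.nonempty_iff_ne_empty.mp hne)
          · exact hsing ⟨i, h⟩
        rw [fibMon_mul_nondisj t hsq this, mul_zero]
      have hS : ∀ i ∈ S, c i * (fibMon t (S.erase i) * fibMon t T) = 0 := by
        intro i hi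
        have : ¬ Disjoint (S.erase i) T := by
          intro hdis
          rw [Finset.disjoint_iff_inter_eq_empty, Finset.erase_inter] at hdis
          have : S ∩ T ⊆ {i} := by
            intro x hx
            by_cases hxi : x = i
            · simp [hxi]
            · exact absurd (Finset.mem_erase.mpr ⟨hxi, hx⟩) (by rw [hdis]; simp)
          rcases Finset.subset_singleton_iff.mp this with h | h
          · exact absurd h (Finset.nonempty_iff_ne_empty.mp hne)
          · exact hsing ⟨i, h⟩
        rw [fibMon_mul_nondisj t hsq this, mul_zero]
      rw [Finset.sum_eq_zero hT, Finset.sum_eq_zero hS, add_zero]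

theorem fibTauRaw_leibniz (hchar : (2 : R) = 0) (D : Derivation k R R) (x y : R) :
    fibTauRaw t hsq hadj pd hpd D (x * y)
      = x * fibTauRaw t hsq hadj pd hpd D y
        + fibTauRaw t hsq hadj pd hpd D x * y := by
  set τ := fibTauRaw t hsq hadj pd hpd D with hτ
  have key : ∀ S : Finset ℕ, ∀ y : R,
      τ (fibMon t S * y) = fibMon t S * τ y + τ (fibMon t S) * y := by
    intro S
    have h : τ.comp (LinearMap.mulLeft k (fibMon t S))
        = (LinearMap.mulLeft k (fibMon t S)).comp τ
          + LinearMap.mulLeft k (τ (fibMon t S)) := by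
      apply Module.Basis.ext (fibBasis t hsq hadj pd hpd)
      intro T
      simp only [LinearMap.comp_apply, LinearMap.add_apply, LinearMap.mulLeft_apply,
        fibBasis_apply]
      exact fibTauRaw_mon_mul t hsq hadj pd hpd hchar D S T
    intro y
    have := DFunLike.congr_fun h y
    simpa using this
  have h : τ.comp (LinearMap.mulRight k y)
      = LinearMap.mulRight k (τ y) + (LinearMap.mulRight k y).comp τ := by
    apply Module.Basis.ext (fibBasis t hsq hadj pd hpd)
    intro S
    simp only [LinearMap.comp_apply, LinearMap.add_apply, LinearMap.mulRight_apply,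
      fibBasis_apply]
    exact key S y
  have := DFunLike.congr_fun h x
  simpa using this

/-- the shifted derivation -/
noncomputable def fibTauDer (hchar : (2 : R) = 0) (D : Derivation k R R) :
    Derivation k R R where
  toLinearMap := fibTauRaw t hsq hadj pd hpd D
  map_one_eq_zero' := by
    show fibTauRaw t hsq hadj pd hpd D 1 = 0
    have h1 : (1 : R) = fibMon t ∅ := by simp [fibMon]
    rw [h1, fibTauRaw_mon]
    simp
  leibniz' := by
    intro a b
    show fibTauRaw t hsq hadj pd hpd D (a * b)
      = a • fibTauRaw t hsq hadj pd hpd D b + b • fibTauRaw t hsq hadj pd hpd D a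
    rw [smul_eq_mul, smul_eq_mul, fibTauRaw_leibniz t hsq hadj pd hpd hchar D a b]
    ring

theorem fibTauDer_apply (hchar : (2 : R) = 0) (D : Derivation k R R) (x : R) :
    fibTauDer t hsq hadj pd hpd hchar D x = fibTauRaw t hsq hadj pd hpd D x := rfl

theorem fibTauDer_t (hchar : (2 : R) = 0) (D : Derivation k R R) (j : ℕ) :
    fibTauDer t hsq hadj pd hpd hchar D (t j) = fibC t hsq hadj pd hpd D j := by
  have h1 : t j = fibMon t {j} := by simp [fibMon]
  rw [fibTauDer_apply, h1, fibTauRaw_mon, Finset.sum_singleton, Finset.erase_singleton]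
  simp [fibMon]

theorem fibTauDer_t_zero (hchar : (2 : R) = 0) (D : Derivation k R R) :
    fibTauDer t hsq hadj pd hpd hchar D (t 0) = 0 :=
  fibTauDer_t t hsq hadj pd hpd hchar D 0

theorem fibTauDer_t_succ (hchar : (2 : R) = 0) (D : Derivation k R R) (j : ℕ) :
    fibTauDer t hsq hadj pd hpd hchar D (t (j + 1))
      = fibSigma t hsq hadj pd hpd (D (t j)) :=
  fibTauDer_t t hsq hadj pd hpd hchar D (j + 1)

theorem fibTauDer_sigma (hchar : (2 : R) = 0) (D : Derivation k R R) (x : R) :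
    fibTauDer t hsq hadj pd hpd hchar D (fibSigma t hsq hadj pd hpd x)
      = fibSigma t hsq hadj pd hpd (D x) := by
  have hx : x ∈ Algebra.adjoin k (Set.range t) := by rw [hadj]; trivial
  induction hx using Algebra.adjoin_induction with
  | mem z hz =>
    obtain ⟨j, rfl⟩ := hz
    rw [fibSigma_t, fibTauDer_t_succ]
  | algebraMap r =>
    rw [AlgHom.commutes, Derivation.map_algebraMap, Derivation.map_algebraMap, map_zero]
  | add x y hx hy ihx ihy =>
    rw [map_add, map_add, map_add, map_add, ihx, ihy]
  | mul x y hx hy ihx ihy =>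
    rw [map_mul, Derivation.leibniz, Derivation.leibniz, smul_eq_mul, smul_eq_mul,
      smul_eq_mul, smul_eq_mul, map_add, map_mul, map_mul, ihx, ihy]

theorem fibTauDer_ext (hext : ∀ D D' : Derivation k R R, (∀ j, D (t j) = D' (t j)) → D = D')
    (hchar : (2 : R) = 0) (D E : Derivation k R R)
    (h0 : E (t 0) = 0)
    (hs : ∀ j, E (t (j + 1)) = fibSigma t hsq hadj pd hpd (D (t j))) :
    fibTauDer t hsq hadj pd hpd hchar D = E := by
  apply hext
  intro j
  cases j with
  | zero => rw [fibTauDer_t_zero, h0]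
  | succ j => rw [fibTauDer_t_succ, hs]

/-- the shift of derivations as a Lie algebra homomorphism -/
noncomputable def fibTauLie
    (hext : ∀ D D' : Derivation k R R, (∀ j, D (t j) = D' (t j)) → D = D')
    (hchar : (2 : R) = 0) :
    Derivation k R R →ₗ⁅k⁆ Derivation k R R where
  toFun := fibTauDer t hsq hadj pd hpd hchar
  map_add' D E := by
    apply fibTauDer_ext t hsq hadj pd hpd hext hchar
    · rw [Derivation.add_apply, fibTauDer_t_zero, fibTauDer_t_zero, add_zero]
    · intro j
      rw [Derivation.add_apply, fibTauDer_t_succ, fibTauDer_t_succ,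
        Derivation.add_apply, map_add]
  map_smul' a D := by
    apply fibTauDer_ext t hsq hadj pd hpd hext hchar
    · rw [Derivation.smul_apply, fibTauDer_t_zero, smul_zero]
    · intro j
      rw [Derivation.smul_apply, fibTauDer_t_succ, Derivation.smul_apply,
        map_smul, RingHom.id_apply]
  map_lie' {D E} := by
    show fibTauDer t hsq hadj pd hpd hchar ⁅D, E⁆
      = ⁅fibTauDer t hsq hadj pd hpd hchar D, fibTauDer t hsq hadj pd hpd hchar E⁆
    apply fibTauDer_ext t hsq hadj pd hpd hext hchar
    · simp [Derivation.commutator_apply, fibTauDer_t_zero]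
    · intro j
      simp [Derivation.commutator_apply, fibTauDer_t_succ, fibTauDer_sigma, map_sub]

theorem fibTauDer_v (hext : ∀ D D' : Derivation k R R, (∀ j, D (t j) = D' (t j)) → D = D')
    (hchar : (2 : R) = 0)
    (v : ℕ → Derivation k R R)
    (hvlt : ∀ i j, 1 ≤ i → j < i → v i (t j) = 0)
    (hveq : ∀ i, 1 ≤ i → v i (t i) = 1)
    (hvgt : ∀ i j, 1 ≤ i → i < j → v i (t j) = ∏ m ∈ Finset.Ico (i - 1) (j - 1), t m)
    (i : ℕ) (hi : 1 ≤ i) :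
    fibTauDer t hsq hadj pd hpd hchar (v i) = v (i + 1) := by
  apply fibTauDer_ext t hsq hadj pd hpd hext hchar
  · exact hvlt (i + 1) 0 (by omega) (by omega)
  · intro j
    rcases Nat.lt_trichotomy j i with hj | hj | hj
    · rw [hvlt i j hi hj, map_zero, hvlt (i + 1) (j + 1) (by omega) (by omega)]
    · subst hj
      rw [hveq j hi, map_one, hveq (j + 1) (by omega)]
    · rw [hvgt i j hi hj, hvgt (i + 1) (j + 1) (by omega) (by omega)]
      have h1 : i - 1 + 1 = i := Nat.sub_add_cancel hi
      have h2 : j - 1 + 1 = j := Nat.sub_add_cancel (by omega)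
      have h3 : (∏ m ∈ Finset.Ico (i - 1) (j - 1), t m)
          = fibMon t (Finset.Ico (i - 1) (j - 1)) := rfl
      rw [h3, fibSigma_mon, fibShift_Ico, h1, h2]
      have h4 : i + 1 - 1 = i := by omega
      have h5 : j + 1 - 1 = j := by omega
      rw [h4, h5]
      rfl

end Sigma


end Fib


theorem fibTauLie_apply {k : Type} [Field k] {R : Type} [CommRing R] [Algebra k R]
    [Nontrivial R] (t : ℕ → R) (hsq : ∀ i, t i ^ 2 = 0)
    (hadj : Algebra.adjoin k (Set.range t) = ⊤)
    (pd : ℕ → Derivation k R R)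
    (hpd : ∀ i j, pd i (t j) = if i = j then 1 else 0)
    (hext : ∀ D D' : Derivation k R R, (∀ j, D (t j) = D' (t j)) → D = D')
    (hchar : (2 : R) = 0) (D : Derivation k R R) :
    fibTauLie t hsq hadj pd hpd hext hchar D = fibTauDer t hsq hadj pd hpd hchar D := rfl


/-- The shift map `τ` (defined on generators by `τ(tᵢ) = t_{i+1}` and
`τ(∂ᵢ) = ∂_{i+1}`) restricts to an injective Lie algebra homomorphism `τ : L → L` of the
Fibonacci Lie algebra `L = ⟨v₁, v₂⟩`, with `τ(vᵢ) = v_{i+1}` for all `i ≥ 1`; its image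
`L₁ = τ(L)` is the subalgebra generated by `{v₂, v₃}`. -/
theorem fibonacci_shift_monomorphism
    {k : Type} [Field k] [CharP k 2]
    {R : Type} [CommRing R] [Algebra k R]
    -- `R = k[t₀, t₁, …]/(tᵢ²)` is the ring of truncated polynomials:
    (t : ℕ → R)
    (hsq : ∀ i, t i ^ 2 = 0)
    (hadj : Algebra.adjoin k (Set.range t) = ⊤)
    (hext : ∀ D D' : Derivation k R R, (∀ j, D (t j) = D' (t j)) → D = D')
    -- `pd i` is the partial derivative `∂ᵢ = ∂/∂tᵢ`:
    (pd : ℕ → Derivation k R R)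
    (hpd : ∀ i j, pd i (t j) = if i = j then 1 else 0)
    -- `v i` are the pivot elements, defined recursively by `vᵢ = ∂ᵢ + t_{i-1} v_{i+1}`,
    -- i.e. the derivations `vᵢ = ∂ᵢ + t_{i-1}(∂_{i+1} + tᵢ(∂_{i+2} + ⋯))`:
    (v : ℕ → Derivation k R R)
    (hrec : ∀ i, 1 ≤ i → v i = pd i + t (i - 1) • v (i + 1))
    (hvlt : ∀ i j, 1 ≤ i → j < i → v i (t j) = 0)
    (hveq : ∀ i, 1 ≤ i → v i (t i) = 1)
    (hvgt : ∀ i j, 1 ≤ i → i < j → v i (t j) = ∏ m ∈ Finset.Ico (i - 1) (j - 1), t m)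
    : ∃ τ : ↥(LieSubalgebra.lieSpan k (Derivation k R R) {v 1, v 2}) →ₗ⁅k⁆ Derivation k R R,
        Function.Injective τ ∧
          (∀ i, 1 ≤ i →
            ∀ h : v i ∈ LieSubalgebra.lieSpan k (Derivation k R R) {v 1, v 2},
              τ ⟨v i, h⟩ = v (i + 1)) ∧
          τ.range = LieSubalgebra.lieSpan k (Derivation k R R) {v 2, v 3} ∧
          LieSubalgebra.lieSpan k (Derivation k R R) {v 2, v 3} ≤
            LieSubalgebra.lieSpan k (Derivation k R R) {v 1, v 2} := by
  classical
  rcases subsingleton_or_nontrivial R with hR | hR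
  · -- degenerate case `R = 0`: everything is trivial
    have hds : Subsingleton (Derivation k R R) :=
      ⟨fun D E => by ext x; exact Subsingleton.elim _ _⟩
    refine ⟨(LieSubalgebra.lieSpan k (Derivation k R R) {v 1, v 2}).incl, ?_, ?_, ?_, ?_⟩
    · intro a b _
      exact Subtype.ext (Subsingleton.elim _ _)
    · intro i _ h
      exact Subsingleton.elim _ _
    · apply le_antisymm
      · intro x _
        have : x = 0 := Subsingleton.elim _ _
        rw [this]
        exact zero_mem _
      · intro x _
        have : x = 0 := Subsingleton.elim _ _
        rw [this]
        exact zero_mem _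
    · intro x _
      have : x = 0 := Subsingleton.elim _ _
      rw [this]
      exact zero_mem _
  · -- main case
    have h2k : ((2 : ℕ) : k) = 0 := by exact_mod_cast CharP.cast_eq_zero k 2
    have hchar : (2 : R) = 0 := by
      have h := congrArg (algebraMap k R) h2k
      rw [map_natCast, map_zero] at h
      exact_mod_cast h
    set L0 := LieSubalgebra.lieSpan k (Derivation k R R) {v 1, v 2} with hL0
    set τL := fibTauLie t hsq hadj pd hpd hext hchar with hτL
    have hv12 : fibTauDer t hsq hadj pd hpd hchar (v 1) = v 2 :=
      fibTauDer_v t hsq hadj pd hpd hext hchar v hvlt hveq hvgt 1 (by omega)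
    have hv23 : fibTauDer t hsq hadj pd hpd hchar (v 2) = v 3 :=
      fibTauDer_v t hsq hadj pd hpd hext hchar v hvlt hveq hvgt 2 (by omega)
    have hbr : ⁅v 1, v 2⁆ = v 3 := fib_bracket_v12 t hsq hext v hvlt hveq hvgt
    -- membership in L0 forces vanishing at t 0
    have hK : ∀ D ∈ L0, D (t 0) = 0 := by
      let K : LieSubalgebra k (Derivation k R R) :=
        { carrier := {D : Derivation k R R | D (t 0) = 0}
          add_mem' := by
            intro a b ha hb
            simp only [Set.mem_setOf_eq, Derivation.add_apply] at *
            rw [ha, hb, add_zero]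
          zero_mem' := by simp only [Set.mem_setOf_eq]; rfl
          smul_mem' := by
            intro c x hx
            simp only [Set.mem_setOf_eq, Derivation.smul_apply] at *
            rw [hx, smul_zero]
          lie_mem' := by
            intro x y hx hy
            simp only [Set.mem_setOf_eq, Derivation.commutator_apply] at *
            rw [hx, hy, map_zero, map_zero, sub_zero] }
      have hle : L0 ≤ K := by
        rw [hL0, LieSubalgebra.lieSpan_le]
        intro D hD
        rcases hD with rfl | hD
        · exact hvlt 1 0 (by omega) (by omega)
        · rw [Set.mem_singleton_iff] at hD
          subst hD
          exact hvlt 2 0 (by omega) (by omega)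
      exact fun D hD => hle hD
    refine ⟨τL.comp L0.incl, ?_, ?_, ?_, ?_⟩
    · -- injectivity
      rintro ⟨D, hD⟩ ⟨E, hE⟩ h
      have hDE : fibTauDer t hsq hadj pd hpd hchar D
          = fibTauDer t hsq hadj pd hpd hchar E := h
      have hDEt : D = E := by
        apply hext
        intro j
        cases j with
        | zero => rw [hK D hD, hK E hE]
        | succ j =>
          have := congrArg (fun W : Derivation k R R => W (t (j + 1 + 1))) hDE
          simp only [fibTauDer_t_succ] at this
          exact fibSigma_injective t hsq hadj pd hpd this
      exact Subtype.ext hDEt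
    · -- τ (v i) = v (i + 1)
      intro i hi h
      show fibTauDer t hsq hadj pd hpd hchar (v i) = v (i + 1)
      exact fibTauDer_v t hsq hadj pd hpd hext hchar v hvlt hveq hvgt i hi
    · -- the range is the lie span of {v 2, v 3}
      apply le_antisymm
      · rintro x ⟨⟨D, hD⟩, rfl⟩
        have hle : L0 ≤ LieSubalgebra.comap τL
            (LieSubalgebra.lieSpan k (Derivation k R R) {v 2, v 3}) := by
          rw [hL0, LieSubalgebra.lieSpan_le]
          intro W hW
          have hW' : W = v 1 ∨ W = v 2 := by
            simpa [Set.mem_insert_iff, Set.mem_singleton_iff] using hW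
          rcases hW' with rfl | rfl
          · show τL (v 1) ∈ LieSubalgebra.lieSpan k (Derivation k R R) {v 2, v 3}
            rw [fibTauLie_apply, hv12]
            exact LieSubalgebra.subset_lieSpan (Set.mem_insert _ _)
          · show τL (v 2) ∈ LieSubalgebra.lieSpan k (Derivation k R R) {v 2, v 3}
            rw [fibTauLie_apply, hv23]
            exact LieSubalgebra.subset_lieSpan (Set.mem_insert_of_mem _ rfl)
        exact hle hD
      · rw [LieSubalgebra.lieSpan_le]
        intro W hW
        have hW' : W = v 2 ∨ W = v 3 := by
          simpa [Set.mem_insert_iff, Set.mem_singleton_iff] using hW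
        rcases hW' with rfl | rfl
        · exact ⟨⟨v 1, LieSubalgebra.subset_lieSpan (Set.mem_insert _ _)⟩, hv12⟩
        · exact ⟨⟨v 2, LieSubalgebra.subset_lieSpan (Set.mem_insert_of_mem _ rfl)⟩, hv23⟩
    · -- L₁ is contained in L
      rw [LieSubalgebra.lieSpan_le]
      intro W hW
      have hW' : W = v 2 ∨ W = v 3 := by
        simpa [Set.mem_insert_iff, Set.mem_singleton_iff] using hW
      rcases hW' with rfl | rfl
      · exact LieSubalgebra.subset_lieSpan (Set.mem_insert_of_mem _ rfl)
      · rw [← hbr]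
        exact LieSubalgebra.lie_mem _
          (LieSubalgebra.subset_lieSpan (Set.mem_insert _ _))
          (LieSubalgebra.subset_lieSpan (Set.mem_insert_of_mem _ rfl))
end

section
/- The Lie algebra L̃ = L/A decomposes as L̃ = k∂_1 ⋉ L_1, a semidirect product of the one-dimensional subalgebra spanned by ∂_1 with L_1 = ⟨v_2, v_3⟩ ≅ L (via the shift τ). -/
open Finset
set_option linter.unusedSectionVars false
set_option maxHeartbeats 1000000
-- auxiliary definitions and lemmas
section FibAux
variable {k : Type} [Field k] [CharP k 2] {R : Type} [CommRing R] [Algebra k R]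
def fibMono (t : ℕ → R) (S : Finset ℕ) : R := ∏ i ∈ S, t i
lemma fibMono_empty (t : ℕ → R) : fibMono t ∅ = 1 := rfl
lemma fibMono_mul (t : ℕ → R) (hsq : ∀ i, t i ^ 2 = 0) (S V : Finset ℕ) :
    fibMono t S * fibMono t V = if Disjoint S V then fibMono t (S ∪ V) else 0 := by
  split_ifs with h
  · rw [fibMono, fibMono, fibMono, ← Finset.prod_union h]
  · obtain ⟨i, hiS, hiV⟩ := Finset.not_disjoint_iff.mp h
    rw [fibMono, fibMono, ← Finset.mul_prod_erase _ _ hiS, ← Finset.mul_prod_erase _ _ hiV]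
    have : t i * (∏ x ∈ S.erase i, t x) * (t i * ∏ x ∈ V.erase i, t x)
        = t i ^ 2 * ((∏ x ∈ S.erase i, t x) * ∏ x ∈ V.erase i, t x) := by ring
    rw [this, hsq i, zero_mul]
lemma fib_Dmono (t : ℕ → R) (D : Derivation k R R) (V : Finset ℕ) :
    D (fibMono t V) = ∑ i ∈ V, fibMono t (V.erase i) * D (t i) := by
  classical
  induction V using Finset.induction_on with
  | empty => simp [fibMono]
  | @insert a s ha ih =>
    rw [fibMono, Finset.prod_insert ha, D.leibniz, smul_eq_mul, smul_eq_mul,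
      Finset.sum_insert ha, show (∏ i ∈ s, t i) = fibMono t s from rfl, ih,
      Finset.erase_insert ha, Finset.mul_sum, add_comm]
    congr 1
    apply Finset.sum_congr rfl
    intro i hi
    rw [Finset.erase_insert_of_ne (by rintro rfl; exact ha hi), fibMono, fibMono,
      Finset.prod_insert (fun hmem => ha (Finset.mem_of_mem_erase hmem))]
    ring
end FibAux

section FibLin

variable {k : Type} [Field k] [CharP k 2] {R : Type} [CommRing R] [Algebra k R]
    (t : ℕ → R)
    (hsq : ∀ i, t i ^ 2 = 0)
    (hadj : Algebra.adjoin k (Set.range t) = ⊤)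
    (pd : ℕ → Derivation k R R)
    (hpd : ∀ i j, pd i (t j) = if i = j then 1 else 0)

include hpd in
lemma fib_pd_mono (i : ℕ) (V : Finset ℕ) :
    pd i (fibMono t V) = if i ∈ V then fibMono t (V.erase i) else 0 := by
  classical
  rw [fib_Dmono]
  rw [Finset.sum_congr rfl (fun j (hj : j ∈ V) => by rw [hpd i j])]
  split_ifs with h
  · rw [Finset.sum_eq_single i]
    · rw [if_pos rfl, mul_one]
    · intro b _ hb
      rw [if_neg (fun hh => hb hh.symm), mul_zero]
    · intro hh; exact absurd h hh
  · apply Finset.sum_eq_zero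
    intro b hb
    rw [if_neg (by rintro rfl; exact h hb), mul_zero]

include hsq hadj in
lemma fib_mono_span : Submodule.span k (Set.range (fibMono t)) = ⊤ := by
  have hmul : ∀ x y : R, x ∈ Submodule.span k (Set.range (fibMono t)) →
      y ∈ Submodule.span k (Set.range (fibMono t)) →
      x * y ∈ Submodule.span k (Set.range (fibMono t)) := by
    intro x y hx hy
    induction hx, hy using Submodule.span_induction₂ with
    | mem_mem a b ha hb =>
      obtain ⟨S, rfl⟩ := ha
      obtain ⟨V, rfl⟩ := hb
      rw [fibMono_mul t hsq]
      split_ifs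
      · exact Submodule.subset_span (Set.mem_range_self _)
      · exact Submodule.zero_mem _
    | zero_left b hb => rw [zero_mul]; exact Submodule.zero_mem _
    | zero_right a ha => rw [mul_zero]; exact Submodule.zero_mem _
    | add_left a b c _ _ _ h1 h2 => rw [add_mul]; exact Submodule.add_mem _ h1 h2
    | add_right a b c _ _ _ h1 h2 => rw [mul_add]; exact Submodule.add_mem _ h1 h2
    | smul_left r a b _ _ h => rw [smul_mul_assoc]; exact Submodule.smul_mem _ _ h
    | smul_right r a b _ _ h => rw [mul_smul_comm]; exact Submodule.smul_mem _ _ h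
  have hone : (1 : R) ∈ Submodule.span k (Set.range (fibMono t)) :=
    Submodule.subset_span ⟨∅, fibMono_empty t⟩
  have hle : Algebra.adjoin k (Set.range t)
      ≤ (Submodule.span k (Set.range (fibMono t))).toSubalgebra hone hmul := by
    apply Algebra.adjoin_le
    rintro x ⟨j, rfl⟩
    have : fibMono t {j} = t j := by
      rw [fibMono, Finset.prod_singleton]
    exact Submodule.subset_span ⟨{j}, this⟩
  rw [eq_top_iff]
  intro x _
  have hx : x ∈ Algebra.adjoin k (Set.range t) := by rw [hadj]; trivial
  exact hle hx

include hsq hadj in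
lemma fib_T_surj : Function.Surjective (Finsupp.linearCombination k (fibMono t : Finset ℕ → R)) := by
  rw [← LinearMap.range_eq_top, Finsupp.range_linearCombination]
  exact fib_mono_span t hsq hadj

include hpd in
lemma fib_pdList_mono (l : List ℕ) (hl : l.Nodup) (V : Finset ℕ) :
    ((l.map (fun i => ((pd i : Derivation k R R) : R →ₗ[k] R))).prod) (fibMono t V)
      = if l.toFinset ⊆ V then fibMono t (V \ l.toFinset) else 0 := by
  classical
  induction l with
  | nil =>
    simp only [List.map_nil, List.prod_nil, List.toFinset_nil]
    simp only [Finset.empty_subset, if_true, Finset.sdiff_empty]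
    rfl
  | cons a l ih =>
    rw [List.nodup_cons] at hl
    rw [List.map_cons, List.prod_cons, Module.End.mul_apply, ih hl.2, List.toFinset_cons]
    by_cases hsub : l.toFinset ⊆ V
    · rw [if_pos hsub]
      have : ((pd a : Derivation k R R) : R →ₗ[k] R) (fibMono t (V \ l.toFinset))
          = pd a (fibMono t (V \ l.toFinset)) := rfl
      rw [this, fib_pd_mono t pd hpd]
      by_cases haV : a ∈ V
      · rw [if_pos (Finset.mem_sdiff.mpr ⟨haV, fun h => hl.1 (List.mem_toFinset.mp h)⟩),
          if_pos (Finset.insert_subset_iff.mpr ⟨haV, hsub⟩), Finset.sdiff_insert]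
      · rw [if_neg (fun h => haV (Finset.mem_sdiff.mp h).1),
          if_neg (fun h => haV (Finset.insert_subset_iff.mp h).1)]
    · rw [if_neg hsub, if_neg (fun h => hsub (Finset.insert_subset_iff.mp h).2), map_zero]

include hsq hpd in
lemma fib_T_inj [Nontrivial R] :
    Function.Injective (Finsupp.linearCombination k (fibMono t : Finset ℕ → R)) := by
  classical
  have key : ∀ z : Finset ℕ →₀ k,
      Finsupp.linearCombination k (fibMono t) z = 0 → z = 0 := by
    intro z hz
    ext S
    by_cases hS : S ∈ z.support
    swap
    · rw [Finsupp.notMem_support_iff.mp hS]; rfl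
    set U : Finset ℕ := S ∪ z.support.sup id with hU
    have hTU : ∀ T ∈ z.support, T ⊆ U := by
      intro T hT
      exact Finset.Subset.trans (Finset.le_sup (f := id) hT) Finset.subset_union_right
    have hSU : S ⊆ U := Finset.subset_union_left
    set E : R →ₗ[k] R :=
      ((U.sort (·≤·)).map (fun i => ((pd i : Derivation k R R) : R →ₗ[k] R))).prod with hE
    have hEU : ∀ V : Finset ℕ, E (fibMono t V) = if U ⊆ V then fibMono t (V \ U) else 0 := by
      intro V
      rw [hE, fib_pdList_mono t pd hpd _ (Finset.sort_nodup _ _), Finset.sort_toFinset]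
    have h0 : E (fibMono t (U \ S) * Finsupp.linearCombination k (fibMono t) z) = 0 := by
      rw [hz, mul_zero, map_zero]
    rw [Finsupp.linearCombination_apply, Finsupp.sum, Finset.mul_sum, map_sum] at h0
    have hterm : ∀ T ∈ z.support, T ≠ S →
        E (fibMono t (U \ S) * (z T • fibMono t T)) = 0 := by
      intro T hT hTS
      rw [mul_smul_comm, map_smul, fibMono_mul t hsq]
      by_cases hdisj : Disjoint (U \ S) T
      · have hTSsub : T ⊆ S := by
          intro a haT
          by_contra haS
          exact (Finset.disjoint_right.mp hdisj haT)
            (Finset.mem_sdiff.mpr ⟨hTU T hT haT, haS⟩)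
        rw [if_pos hdisj, hEU]
        have : ¬ U ⊆ (U \ S) ∪ T := by
          intro hcon
          apply hTS
          apply Finset.Subset.antisymm hTSsub
          intro a haS
          rcases Finset.mem_union.mp (hcon (hSU haS)) with h | h
          · exact absurd haS (Finset.mem_sdiff.mp h).2
          · exact h
        rw [if_neg this, smul_zero]
      · rw [if_neg hdisj, map_zero, smul_zero]
    have hsum : ∑ T ∈ z.support, E (fibMono t (U \ S) * (z T • fibMono t T))
        = E (fibMono t (U \ S) * (z S • fibMono t S)) := by
      apply Finset.sum_eq_single_of_mem S hS
      intro T hT hTS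
      exact hterm T hT hTS
    rw [hsum] at h0
    rw [mul_smul_comm, map_smul, fibMono_mul t hsq,
      if_pos (Finset.sdiff_disjoint), Finset.sdiff_union_of_subset hSU, hEU,
      if_pos (Finset.Subset.refl U), Finset.sdiff_self] at h0
    have : algebraMap k R (z S) = 0 := by
      rw [Algebra.algebraMap_eq_smul_one]
      exact h0
    have := (RingHom.injective (algebraMap k R)) (by rw [this, map_zero] : algebraMap k R (z S) = algebraMap k R 0)
    exact this
  intro a b hab
  have : a - b = 0 := key (a - b) (by rw [map_sub, hab, sub_self])
  exact sub_eq_zero.mp this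

end FibLin

section FibShift

variable {k : Type} [Field k] [CharP k 2] {R : Type} [CommRing R] [Algebra k R]
    (t : ℕ → R)
    (hsq : ∀ i, t i ^ 2 = 0)
    (hadj : Algebra.adjoin k (Set.range t) = ⊤)

lemma fib_char2' (k : Type) [Field k] [CharP k 2] {R : Type} [CommRing R] [Algebra k R]
    (a : R) : a + a = 0 := by
  have h2 : (algebraMap k R) 2 = 0 := by
    have : (2 : k) = 0 := CharP.cast_eq_zero k 2
    rw [this, map_zero]
  have : a + a = (algebraMap k R) 2 * a := by
    rw [map_ofNat]
    ring
  rw [this, h2, zero_mul]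

/-- the successor embedding -/
def fibSucc : ℕ ↪ ℕ := ⟨Nat.succ, Nat.succ_injective⟩

lemma fibSucc_Ico (a b : ℕ) : (Finset.Ico a b).map fibSucc = Finset.Ico (a+1) (b+1) := by
  ext x
  simp only [Finset.mem_map, Finset.mem_Ico, fibSucc, Function.Embedding.coeFn_mk]
  constructor
  · rintro ⟨y, hy, rfl⟩; omega
  · intro hx
    exact ⟨x - 1, by omega, by omega⟩

lemma fibSucc_not_zero_mem (V : Finset ℕ) : 0 ∉ V.map fibSucc := by
  simp only [Finset.mem_map, fibSucc, Function.Embedding.coeFn_mk]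
  rintro ⟨y, _, hy⟩
  exact Nat.succ_ne_zero y hy

variable (hbij : Function.Bijective (Finsupp.linearCombination k (fibMono t : Finset ℕ → R)))

/-- the shift algebra endomorphism of `R` -/
noncomputable def fibSig : R →ₗ[k] R :=
  (Finsupp.linearCombination k (fibMono t : Finset ℕ → R))
    ∘ₗ (Finsupp.lmapDomain k k (fun S : Finset ℕ => S.map fibSucc))
    ∘ₗ ((LinearEquiv.ofBijective _ hbij).symm : R ≃ₗ[k] (Finset ℕ →₀ k)).toLinearMap

lemma fibT_single (V : Finset ℕ) :
    Finsupp.linearCombination k (fibMono t : Finset ℕ → R) (Finsupp.single V 1) = fibMono t V := by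
  rw [Finsupp.linearCombination_single, one_smul]

lemma fibEq_symm_mono (V : Finset ℕ) :
    (LinearEquiv.ofBijective _ hbij).symm (fibMono t V) = Finsupp.single V 1 := by
  rw [LinearEquiv.symm_apply_eq, LinearEquiv.ofBijective_apply]
  exact (fibT_single t V).symm

lemma fibSig_mono (V : Finset ℕ) :
    fibSig t hbij (fibMono t V) = fibMono t (V.map fibSucc) := by
  rw [fibSig, LinearMap.comp_apply, LinearMap.comp_apply, LinearEquiv.coe_coe,
    fibEq_symm_mono t hbij, Finsupp.lmapDomain_apply, Finsupp.mapDomain_single, fibT_single]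

lemma fibSig_one : fibSig t hbij 1 = 1 := by
  have h : (1 : R) = fibMono t ∅ := rfl
  rw [h, fibSig_mono, Finset.map_empty]

lemma fibSig_inj : Function.Injective (fibSig t hbij) := by
  rw [fibSig, LinearMap.coe_comp, LinearMap.coe_comp]
  apply Function.Injective.comp (g := ⇑(Finsupp.linearCombination k (fibMono t : Finset ℕ → R)))
  · exact hbij.1
  · apply Function.Injective.comp (g := ⇑(Finsupp.lmapDomain k k (fun S : Finset ℕ => S.map fibSucc)))
    · show Function.Injective (Finsupp.mapDomain _)
      exact Finsupp.mapDomain_injective (Finset.map_injective fibSucc)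
    · exact (LinearEquiv.ofBijective _ hbij).symm.injective

include hsq hadj in
lemma fibSig_mul (x y : R) :
    fibSig t hbij (x * y) = fibSig t hbij x * fibSig t hbij y := by
  have hx : x ∈ Submodule.span k (Set.range (fibMono t)) := by
    rw [fib_mono_span t hsq hadj]; trivial
  have hy : y ∈ Submodule.span k (Set.range (fibMono t)) := by
    rw [fib_mono_span t hsq hadj]; trivial
  induction hx, hy using Submodule.span_induction₂ with
  | mem_mem a b ha hb =>
    obtain ⟨S, rfl⟩ := ha
    obtain ⟨V, rfl⟩ := hb
    rw [fibMono_mul t hsq, fibSig_mono, fibSig_mono, fibMono_mul t hsq]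
    by_cases h : Disjoint S V
    · rw [if_pos h, if_pos ((Finset.disjoint_map fibSucc).mpr h), fibSig_mono,
        ← Finset.map_union]
    · rw [if_neg h, if_neg (fun hc => h ((Finset.disjoint_map fibSucc).mp hc)), map_zero]
  | zero_left b hb => rw [zero_mul, map_zero, zero_mul]
  | zero_right a ha => rw [mul_zero, map_zero, mul_zero]
  | add_left a b c ha hb hc h1 h2 => rw [add_mul, map_add, h1, h2, map_add, add_mul]
  | add_right a b c ha hb hc h1 h2 => rw [mul_add, map_add, h1, h2, map_add, mul_add]
  | smul_left r a b ha hb h => rw [smul_mul_assoc, map_smul, h, map_smul, smul_mul_assoc]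
  | smul_right r a b ha hb h => rw [mul_smul_comm, map_smul, h, map_smul, mul_smul_comm]

end FibShift

section FibPsi

/-- the shifted-derivative sum -/
noncomputable def fibW {R : Type} [CommRing R] (t : ℕ → R) (u : ℕ → R) (S : Finset ℕ) : R :=
  ∑ i ∈ S.erase 0, fibMono t (S.erase i) * u (i - 1)

lemma fibW_leib (k : Type) [Field k] [CharP k 2] {R : Type} [CommRing R] [Algebra k R]
    (t : ℕ → R) (hsq : ∀ i, t i ^ 2 = 0) (u : ℕ → R) (S V : Finset ℕ) :
    (if Disjoint S V then fibW t u (S ∪ V) else 0)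
      = fibW t u S * fibMono t V + fibMono t S * fibW t u V := by
  classical
  by_cases h : Disjoint S V
  · rw [if_pos h, fibW, Finset.erase_union_distrib,
      Finset.sum_union (h.mono (Finset.erase_subset _ _) (Finset.erase_subset _ _))]
    congr 1
    · rw [fibW, Finset.sum_mul]
      apply Finset.sum_congr rfl
      intro i hi
      have hiS : i ∈ S := Finset.mem_of_mem_erase hi
      have hiV : i ∉ V := Finset.disjoint_left.mp h hiS
      rw [Finset.erase_union_distrib, Finset.erase_eq_of_notMem hiV]
      have hdisj : Disjoint (S.erase i) V := h.mono_left (Finset.erase_subset _ _)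
      have := fibMono_mul t hsq (S.erase i) V
      rw [if_pos hdisj] at this
      rw [← this]
      ring
    · rw [fibW, Finset.mul_sum]
      apply Finset.sum_congr rfl
      intro i hi
      have hiV : i ∈ V := Finset.mem_of_mem_erase hi
      have hiS : i ∉ S := Finset.disjoint_right.mp h hiV
      rw [Finset.erase_union_distrib, Finset.erase_eq_of_notMem hiS]
      have hdisj : Disjoint S (V.erase i) := h.mono_right (Finset.erase_subset _ _)
      have := fibMono_mul t hsq S (V.erase i)
      rw [if_pos hdisj] at this
      rw [← this]
      ring
  · rw [if_neg h]
    symm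
    obtain ⟨j0, hj0S, hj0V⟩ := Finset.not_disjoint_iff.mp h
    have hA : fibW t u S * fibMono t V
        = ∑ i ∈ (S ∩ V).erase 0, fibMono t (S.erase i) * u (i - 1) * fibMono t V := by
      rw [fibW, Finset.sum_mul]
      symm
      apply Finset.sum_subset (Finset.erase_subset_erase _ Finset.inter_subset_left)
      intro i hiS hiSV
      have hiV : i ∉ V := by
        intro hiV
        exact hiSV (Finset.mem_erase.mpr ⟨(Finset.mem_erase.mp hiS).1,
          Finset.mem_inter.mpr ⟨Finset.mem_of_mem_erase hiS, hiV⟩⟩)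
      have hm : fibMono t (S.erase i) * fibMono t V = 0 := by
        rw [fibMono_mul t hsq, if_neg]
        exact Finset.not_disjoint_iff.mpr ⟨j0, Finset.mem_erase.mpr
          ⟨fun hji => hiV (hji ▸ hj0V), hj0S⟩, hj0V⟩
      calc fibMono t (S.erase i) * u (i - 1) * fibMono t V
          = fibMono t (S.erase i) * fibMono t V * u (i - 1) := by ring
        _ = 0 := by rw [hm, zero_mul]
    have hB : fibMono t S * fibW t u V
        = ∑ i ∈ (S ∩ V).erase 0, fibMono t S * (fibMono t (V.erase i) * u (i - 1)) := by
      rw [fibW, Finset.mul_sum]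
      symm
      apply Finset.sum_subset (Finset.erase_subset_erase _ Finset.inter_subset_right)
      intro i hiV hiSV
      have hiS : i ∉ S := by
        intro hiS
        exact hiSV (Finset.mem_erase.mpr ⟨(Finset.mem_erase.mp hiV).1,
          Finset.mem_inter.mpr ⟨hiS, Finset.mem_of_mem_erase hiV⟩⟩)
      have hm : fibMono t S * fibMono t (V.erase i) = 0 := by
        rw [fibMono_mul t hsq, if_neg]
        exact Finset.not_disjoint_iff.mpr ⟨j0, hj0S, Finset.mem_erase.mpr
          ⟨fun hji => hiS (hji ▸ hj0S), hj0V⟩⟩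
      calc fibMono t S * (fibMono t (V.erase i) * u (i - 1))
          = fibMono t S * fibMono t (V.erase i) * u (i - 1) := by ring
        _ = 0 := by rw [hm, zero_mul]
    have hfg : ∀ i ∈ (S ∩ V).erase 0,
        fibMono t (S.erase i) * u (i - 1) * fibMono t V
          + fibMono t S * (fibMono t (V.erase i) * u (i - 1)) = 0 := by
      intro i hi
      have hiS : i ∈ S := (Finset.mem_inter.mp (Finset.mem_of_mem_erase hi)).1
      have hiV : i ∈ V := (Finset.mem_inter.mp (Finset.mem_of_mem_erase hi)).2
      have heq : fibMono t (S.erase i) * u (i - 1) * fibMono t V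
          = fibMono t S * (fibMono t (V.erase i) * u (i - 1)) := by
        by_cases hex : ∃ j ∈ S ∩ V, j ≠ i
        · obtain ⟨j, hj, hji⟩ := hex
          have hjS : j ∈ S := (Finset.mem_inter.mp hj).1
          have hjV : j ∈ V := (Finset.mem_inter.mp hj).2
          have h1 : fibMono t (S.erase i) * fibMono t V = 0 := by
            rw [fibMono_mul t hsq, if_neg]
            exact Finset.not_disjoint_iff.mpr ⟨j, Finset.mem_erase.mpr ⟨hji, hjS⟩, hjV⟩
          have h2 : fibMono t S * fibMono t (V.erase i) = 0 := by
            rw [fibMono_mul t hsq, if_neg]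
            exact Finset.not_disjoint_iff.mpr ⟨j, hjS, Finset.mem_erase.mpr ⟨hji, hjV⟩⟩
          calc fibMono t (S.erase i) * u (i - 1) * fibMono t V
              = fibMono t (S.erase i) * fibMono t V * u (i - 1) := by ring
            _ = 0 := by rw [h1, zero_mul]
            _ = fibMono t S * fibMono t (V.erase i) * u (i - 1) := by rw [h2, zero_mul]
            _ = fibMono t S * (fibMono t (V.erase i) * u (i - 1)) := by ring
        · push_neg at hex
          have hd1 : Disjoint (S.erase i) V := by
            rw [Finset.disjoint_left]
            intro j hjS hjV
            exact (Finset.mem_erase.mp hjS).1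
              (hex j (Finset.mem_inter.mpr ⟨Finset.mem_of_mem_erase hjS, hjV⟩))
          have hd2 : Disjoint S (V.erase i) := by
            rw [Finset.disjoint_right]
            intro j hjV hjS
            exact (Finset.mem_erase.mp hjV).1
              (hex j (Finset.mem_inter.mpr ⟨hjS, Finset.mem_of_mem_erase hjV⟩))
          have hsets : S.erase i ∪ V = S ∪ V.erase i := by
            ext a
            simp only [Finset.mem_union, Finset.mem_erase]
            by_cases hai : a = i
            · subst hai
              simp [hiS, hiV]
            · simp [hai]
          have h1 := fibMono_mul t hsq (S.erase i) V
          rw [if_pos hd1] at h1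
          have h2 := fibMono_mul t hsq S (V.erase i)
          rw [if_pos hd2] at h2
          calc fibMono t (S.erase i) * u (i - 1) * fibMono t V
              = fibMono t (S.erase i) * fibMono t V * u (i - 1) := by ring
            _ = fibMono t (S.erase i ∪ V) * u (i - 1) := by rw [h1]
            _ = fibMono t (S ∪ V.erase i) * u (i - 1) := by rw [hsets]
            _ = fibMono t S * fibMono t (V.erase i) * u (i - 1) := by rw [h2]
            _ = fibMono t S * (fibMono t (V.erase i) * u (i - 1)) := by ring
      rw [heq]
      exact fib_char2' k _
    rw [hA, hB, ← Finset.sum_add_distrib]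
    exact Finset.sum_eq_zero hfg

end FibPsi

section FibPsi2

variable {k : Type} [Field k] [CharP k 2] {R : Type} [CommRing R] [Algebra k R]
    (t : ℕ → R)
    (hsq : ∀ i, t i ^ 2 = 0)
    (hadj : Algebra.adjoin k (Set.range t) = ⊤)
    (hbij : Function.Bijective (Finsupp.linearCombination k (fibMono t : Finset ℕ → R)))

/-- the underlying linear map of the shifted derivation -/
noncomputable def fibPsiL (D : Derivation k R R) : R →ₗ[k] R :=
  (Finsupp.lsum k fun S : Finset ℕ =>
      LinearMap.toSpanSingleton k R (fibW t (fun j => fibSig t hbij (D (t j))) S))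
    ∘ₗ ((LinearEquiv.ofBijective _ hbij).symm : R ≃ₗ[k] (Finset ℕ →₀ k)).toLinearMap

lemma fibPsiL_mono (D : Derivation k R R) (V : Finset ℕ) :
    fibPsiL t hbij D (fibMono t V) = fibW t (fun j => fibSig t hbij (D (t j))) V := by
  rw [fibPsiL, LinearMap.comp_apply, LinearEquiv.coe_coe, fibEq_symm_mono t hbij,
    Finsupp.lsum_single, LinearMap.toSpanSingleton_apply, one_smul]

include hsq hadj in
lemma fibPsiL_leibniz (D : Derivation k R R) (x y : R) :
    fibPsiL t hbij D (x * y) = fibPsiL t hbij D x * y + x * fibPsiL t hbij D y := by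
  have hx : x ∈ Submodule.span k (Set.range (fibMono t)) := by
    rw [fib_mono_span t hsq hadj]; trivial
  have hy : y ∈ Submodule.span k (Set.range (fibMono t)) := by
    rw [fib_mono_span t hsq hadj]; trivial
  induction hx, hy using Submodule.span_induction₂ with
  | mem_mem a b ha hb =>
    obtain ⟨S, rfl⟩ := ha
    obtain ⟨V, rfl⟩ := hb
    rw [fibMono_mul t hsq, fibPsiL_mono, fibPsiL_mono]
    have key := fibW_leib k t hsq (fun j => fibSig t hbij (D (t j))) S V
    by_cases h : Disjoint S V
    · rw [if_pos h, fibPsiL_mono]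
      rw [if_pos h] at key
      exact key
    · rw [if_neg h, map_zero]
      rw [if_neg h] at key
      exact key
  | zero_left b hb => simp
  | zero_right a ha => simp
  | add_left a b c ha hb hc h1 h2 =>
    rw [add_mul, map_add, h1, h2, map_add]
    ring
  | add_right a b c ha hb hc h1 h2 =>
    rw [mul_add, map_add, h1, h2, map_add]
    ring
  | smul_left r a b ha hb h1 =>
    simp only [smul_mul_assoc, map_smul, h1, smul_add, mul_smul_comm]
  | smul_right r a b ha hb h1 =>
    simp only [mul_smul_comm, map_smul, h1, smul_add, smul_mul_assoc]

/-- the shifted derivation -/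
noncomputable def fibPsi (D : Derivation k R R) : Derivation k R R :=
  Derivation.mk' (fibPsiL t hbij D) (fun a b => by
    rw [fibPsiL_leibniz t hsq hadj hbij D a b, smul_eq_mul, smul_eq_mul]
    ring)

lemma fibPsi_apply (D : Derivation k R R) (x : R) :
    fibPsi t hsq hadj hbij D x = fibPsiL t hbij D x := rfl

lemma fibPsi_t_zero (D : Derivation k R R) : fibPsi t hsq hadj hbij D (t 0) = 0 := by
  have h0 : t 0 = fibMono t {0} := by rw [fibMono, Finset.prod_singleton]
  rw [fibPsi_apply, h0, fibPsiL_mono, fibW, Finset.erase_singleton, Finset.sum_empty]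

lemma fibPsi_t_succ (D : Derivation k R R) (j : ℕ) :
    fibPsi t hsq hadj hbij D (t (j+1)) = fibSig t hbij (D (t j)) := by
  have h0 : t (j+1) = fibMono t {j+1} := by rw [fibMono, Finset.prod_singleton]
  rw [fibPsi_apply, h0, fibPsiL_mono, fibW]
  have h1 : ({j+1} : Finset ℕ).erase 0 = {j+1} :=
    Finset.erase_eq_of_notMem (by simp)
  rw [h1, Finset.sum_singleton, Finset.erase_singleton, fibMono_empty, one_mul]
  simp

include hsq hadj in
lemma fibPsi_sigma (D : Derivation k R R) (x : R) :
    fibPsi t hsq hadj hbij D (fibSig t hbij x) = fibSig t hbij (D x) := by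
  have hx : x ∈ Submodule.span k (Set.range (fibMono t)) := by
    rw [fib_mono_span t hsq hadj]; trivial
  induction hx using Submodule.span_induction with
  | mem a ha =>
    obtain ⟨V, rfl⟩ := ha
    rw [fibSig_mono, fibPsi_apply, fibPsiL_mono, fibW]
    have h1 : (V.map fibSucc).erase 0 = V.map fibSucc :=
      Finset.erase_eq_of_notMem (fibSucc_not_zero_mem V)
    rw [h1, Finset.sum_map]
    have hterm : ∀ j ∈ V, fibMono t ((V.map fibSucc).erase (fibSucc j))
        * fibSig t hbij (D (t (fibSucc j - 1)))
        = fibSig t hbij (fibMono t (V.erase j) * D (t j)) := by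
      intro j hj
      have h2 : (V.map fibSucc).erase (fibSucc j) = (V.erase j).map fibSucc :=
        (Finset.map_erase fibSucc V j).symm
      have h3 : fibSucc j - 1 = j := by
        show j + 1 - 1 = j
        omega
      rw [h2, h3, ← fibSig_mono t hbij, ← fibSig_mul t hsq hadj hbij]
    rw [Finset.sum_congr rfl hterm, ← map_sum, ← fib_Dmono]
  | zero => simp
  | add a b ha hb h1 h2 => simp only [map_add, Derivation.map_add, h1, h2]
  | smul r a ha h1 => simp only [map_smul, Derivation.map_smul, h1]

end FibPsi2

section FibPsi3

variable {k : Type} [Field k] [CharP k 2] {R : Type} [CommRing R] [Algebra k R]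
    (t : ℕ → R)
    (hsq : ∀ i, t i ^ 2 = 0)
    (hadj : Algebra.adjoin k (Set.range t) = ⊤)
    (hext : ∀ D D' : Derivation k R R, (∀ j, D (t j) = D' (t j)) → D = D')
    (hbij : Function.Bijective (Finsupp.linearCombination k (fibMono t : Finset ℕ → R)))
    (v : ℕ → Derivation k R R)
    (hvlt : ∀ i j, 1 ≤ i → j < i → v i (t j) = 0)
    (hveq : ∀ i, 1 ≤ i → v i (t i) = 1)
    (hvgt : ∀ i j, 1 ≤ i → i < j → v i (t j) = ∏ m ∈ Finset.Ico (i - 1) (j - 1), t m)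

include hext in
lemma fibPsi_ext (D D' : Derivation k R R)
    (h0 : fibPsi t hsq hadj hbij D (t 0) = D' (t 0))
    (hsucc : ∀ j, fibPsi t hsq hadj hbij D (t (j+1)) = D' (t (j+1))) :
    fibPsi t hsq hadj hbij D = D' := by
  apply hext
  intro j
  cases j with
  | zero => exact h0
  | succ j => exact hsucc j

include hext in
/-- the shift of derivations as a morphism of Lie algebras -/
noncomputable def fibPsiLie : Derivation k R R →ₗ⁅k⁆ Derivation k R R where
  toFun := fibPsi t hsq hadj hbij
  map_add' D D' := by
    apply hext
    intro j
    rw [Derivation.add_apply]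
    cases j with
    | zero => rw [fibPsi_t_zero, fibPsi_t_zero, fibPsi_t_zero, add_zero]
    | succ j =>
      rw [fibPsi_t_succ, fibPsi_t_succ, fibPsi_t_succ, Derivation.add_apply, map_add]
  map_smul' c D := by
    apply hext
    intro j
    rw [RingHom.id_apply, Derivation.smul_apply]
    cases j with
    | zero => rw [fibPsi_t_zero, fibPsi_t_zero, smul_zero]
    | succ j =>
      rw [fibPsi_t_succ, fibPsi_t_succ, Derivation.smul_apply, map_smul]
  map_lie' {D D'} := by
    apply hext
    intro j
    cases j with
    | zero =>
      rw [fibPsi_t_zero, Derivation.commutator_apply, fibPsi_t_zero, fibPsi_t_zero,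
        map_zero, map_zero, sub_zero]
    | succ j =>
      rw [fibPsi_t_succ, Derivation.commutator_apply, Derivation.commutator_apply,
        fibPsi_t_succ, fibPsi_t_succ, fibPsi_sigma, fibPsi_sigma, map_sub]

include hext in
lemma fibPsiLie_apply (D : Derivation k R R) :
    fibPsiLie t hsq hadj hext hbij D = fibPsi t hsq hadj hbij D := rfl

include hext in
lemma fibPsiLie_inj : Function.Injective (fibPsiLie t hsq hadj hext hbij) := by
  intro D D' h
  apply hext
  intro j
  apply fibSig_inj t hbij
  rw [← fibPsi_t_succ t hsq hadj hbij D j, ← fibPsi_t_succ t hsq hadj hbij D' j]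
  rw [← fibPsiLie_apply t hsq hadj hext hbij, ← fibPsiLie_apply t hsq hadj hext hbij, h]

include hvlt hveq hvgt hext in
lemma fibPsiLie_v (i : ℕ) (hi : 1 ≤ i) :
    fibPsiLie t hsq hadj hext hbij (v i) = v (i + 1) := by
  rw [fibPsiLie_apply]
  apply fibPsi_ext t hsq hadj hext hbij
  · rw [fibPsi_t_zero, hvlt (i+1) 0 (by omega) (by omega)]
  · intro j
    rw [fibPsi_t_succ]
    rcases lt_trichotomy j i with h | h | h
    · rw [hvlt i j hi h, map_zero, hvlt (i+1) (j+1) (by omega) (by omega)]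
    · subst h
      rw [hveq j hi, fibSig_one, hveq (j+1) (by omega)]
    · rw [hvgt i j hi h, hvgt (i+1) (j+1) (by omega) (by omega)]
      have h1 : (∏ m ∈ Finset.Ico (i - 1) (j - 1), t m) = fibMono t (Finset.Ico (i-1) (j-1)) := rfl
      rw [h1, fibSig_mono, fibSucc_Ico]
      have h2 : i - 1 + 1 = i + 1 - 1 := by omega
      have h3 : j - 1 + 1 = j + 1 - 1 := by omega
      rw [h2, h3]
      rfl

include hsq hadj hbij hvlt hveq hvgt hext in
lemma fib_part5 :
    ∃ e : ↥(LieSubalgebra.lieSpan k (Derivation k R R) {v 1, v 2}) ≃ₗ⁅k⁆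
        ↥(LieSubalgebra.lieSpan k (Derivation k R R) {v 2, v 3}),
      ∀ i, 1 ≤ i →
        ∀ h : v i ∈ LieSubalgebra.lieSpan k (Derivation k R R) {v 1, v 2},
          ((e ⟨v i, h⟩ :
              ↥(LieSubalgebra.lieSpan k (Derivation k R R) {v 2, v 3})) :
            Derivation k R R) = v (i + 1) := by
  classical
  set Ψ := fibPsiLie t hsq hadj hext hbij with hΨ
  have hv : ∀ i, 1 ≤ i → Ψ (v i) = v (i + 1) :=
    fun i hi => fibPsiLie_v t hsq hadj hext hbij v hvlt hveq hvgt i hi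
  set S₁ := LieSubalgebra.lieSpan k (Derivation k R R) {v 1, v 2} with hS₁
  set S₂ := LieSubalgebra.lieSpan k (Derivation k R R) {v 2, v 3} with hS₂
  have hmap : ∀ x ∈ S₁, Ψ x ∈ S₂ := by
    have hle : S₁ ≤ LieSubalgebra.comap Ψ S₂ := by
      rw [hS₁, LieSubalgebra.lieSpan_le]
      intro x hx
      rcases hx with rfl | hx
      · show Ψ (v 1) ∈ S₂
        rw [hv 1 (by omega)]
        exact LieSubalgebra.subset_lieSpan (Set.mem_insert _ _)
      · rcases hx with rfl
        show Ψ (v 2) ∈ S₂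
        rw [hv 2 (by omega)]
        exact LieSubalgebra.subset_lieSpan (Set.mem_insert_iff.mpr (Or.inr rfl))
    exact fun x hx => hle hx
  have hsurj : ∀ y ∈ S₂, ∃ x, x ∈ S₁ ∧ Ψ x = y := by
    have hle : S₂ ≤ LieSubalgebra.map Ψ S₁ := by
      rw [hS₂, LieSubalgebra.lieSpan_le]
      intro y hy
      rcases hy with rfl | hy
      · rw [SetLike.mem_coe, LieSubalgebra.mem_map]
        exact ⟨v 1, LieSubalgebra.subset_lieSpan (Set.mem_insert _ _), hv 1 (by omega)⟩
      · rcases hy with rfl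
        rw [SetLike.mem_coe, LieSubalgebra.mem_map]
        exact ⟨v 2, LieSubalgebra.subset_lieSpan (Set.mem_insert_iff.mpr (Or.inr rfl)),
          hv 2 (by omega)⟩
    intro y hy
    exact (LieSubalgebra.mem_map Ψ S₁ y).mp (hle hy)
  let f : S₁ →ₗ⁅k⁆ S₂ :=
    { toFun := fun x => ⟨Ψ x, hmap x x.2⟩
      map_add' := fun x y => Subtype.ext (by
        show Ψ (↑x + ↑y) = Ψ ↑x + Ψ ↑y
        exact Ψ.map_add _ _)
      map_smul' := fun c x => Subtype.ext (by
        show Ψ (c • ↑x) = c • Ψ ↑x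
        exact Ψ.map_smul _ _)
      map_lie' := fun {x y} => Subtype.ext (by
        show Ψ ⁅(↑x : Derivation k R R), ↑y⁆ = ⁅Ψ ↑x, Ψ ↑y⁆
        exact Ψ.map_lie _ _) }
  have hfbij : Function.Bijective f := by
    constructor
    · intro x y hxy
      apply Subtype.ext
      apply fibPsiLie_inj t hsq hadj hext hbij
      exact congrArg Subtype.val hxy
    · intro y
      obtain ⟨x, hx, hxy⟩ := hsurj ↑y y.2
      exact ⟨⟨x, hx⟩, Subtype.ext hxy⟩
  refine ⟨LieEquiv.ofBijective f hfbij, ?_⟩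
  intro i hi h
  show (f ⟨v i, h⟩ : Derivation k R R) = v (i + 1)
  show Ψ (v i) = v (i + 1)
  exact hv i hi

end FibPsi3


section FibMain

variable {k : Type} [Field k] [CharP k 2] {R : Type} [CommRing R] [Algebra k R]
    (t : ℕ → R)
    (hsq : ∀ i, t i ^ 2 = 0)
    (hadj : Algebra.adjoin k (Set.range t) = ⊤)
    (hext : ∀ D D' : Derivation k R R, (∀ j, D (t j) = D' (t j)) → D = D')
    (pd : ℕ → Derivation k R R)
    (hpd : ∀ i j, pd i (t j) = if i = j then 1 else 0)
    (v : ℕ → Derivation k R R)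
    (hrec : ∀ i, 1 ≤ i → v i = pd i + t (i - 1) • v (i + 1))
    (hvlt : ∀ i j, 1 ≤ i → j < i → v i (t j) = 0)
    (hveq : ∀ i, 1 ≤ i → v i (t i) = 1)
    (hvgt : ∀ i j, 1 ≤ i → i < j → v i (t j) = ∏ m ∈ Finset.Ico (i - 1) (j - 1), t m)

include hvlt hveq hvgt in
lemma fib_v_t (i j : ℕ) (hi : 1 ≤ i) :
    v i (t j) = if i ≤ j then fibMono t (Finset.Ico (i-1) (j-1)) else 0 := by
  rcases lt_trichotomy j i with h | h | h
  · rw [if_neg (by omega), hvlt i j hi h]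
  · rw [h, if_pos le_rfl, hveq i hi, show Finset.Ico (i-1) (i-1) = ∅ by simp, fibMono_empty]
  · rw [if_pos (le_of_lt h), hvgt i j hi h]; rfl

include hext hpd hvlt hveq hvgt in
lemma fib_br_pd1_v2 : ⁅pd 1, v 2⁆ = v 3 := by
  apply hext
  intro j
  rw [Derivation.commutator_apply]
  have hv2 : v 2 (pd 1 (t j)) = 0 := by
    rw [hpd]
    split_ifs
    · exact Derivation.map_one_eq_zero _
    · exact map_zero _
  rw [hv2, sub_zero]
  rw [fib_v_t t v hvlt hveq hvgt 2 j (by norm_num), fib_v_t t v hvlt hveq hvgt 3 j (by norm_num)]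
  split_ifs with h2 h3 h3
  · -- 2 ≤ j and 3 ≤ j
    rw [fib_pd_mono t pd hpd, if_pos (by simp [Finset.mem_Ico]; omega)]
    congr 1
    ext m
    simp [Finset.mem_erase, Finset.mem_Ico]
    omega
  · -- 2 ≤ j, ¬ 3 ≤ j, so j = 2
    have : j = 2 := by omega
    subst this
    rw [show Finset.Ico 1 1 = (∅ : Finset ℕ) by simp, fibMono_empty]
    exact Derivation.map_one_eq_zero _
  · omega
  · exact map_zero _

include hext hpd hvlt hveq hvgt in
lemma fib_br_pd1_v3 : ⁅pd 1, v 3⁆ = 0 := by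
  apply hext
  intro j
  rw [Derivation.commutator_apply]
  have hv3 : v 3 (pd 1 (t j)) = 0 := by
    rw [hpd]
    split_ifs
    · exact Derivation.map_one_eq_zero _
    · exact map_zero _
  rw [hv3, sub_zero, fib_v_t t v hvlt hveq hvgt 3 j (by norm_num)]
  have h0 : (0 : Derivation k R R) (t j) = 0 := rfl
  rw [h0]
  split_ifs with h3
  · rw [fib_pd_mono t pd hpd, if_neg (by simp [Finset.mem_Ico])]
  · exact map_zero _

end FibMain

section FibParts

variable {k : Type} [Field k] [CharP k 2] {R : Type} [CommRing R] [Algebra k R]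
    (t : ℕ → R)
    (hext : ∀ D D' : Derivation k R R, (∀ j, D (t j) = D' (t j)) → D = D')
    (pd : ℕ → Derivation k R R)
    (hpd : ∀ i j, pd i (t j) = if i = j then 1 else 0)
    (v : ℕ → Derivation k R R)
    (hvlt : ∀ i j, 1 ≤ i → j < i → v i (t j) = 0)
    (hbr2 : ⁅pd 1, v 2⁆ = v 3)
    (hbr3 : ⁅pd 1, v 3⁆ = 0)

local notation "Der" => Derivation k R R
local notation "SS" => LieSubalgebra.lieSpan k (Derivation k R R) {v 2, v 3}
local notation "PP" => LieSubalgebra.lieSpan k (Derivation k R R) {pd 1, v 2}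

include hbr2 in
lemma fib_S_le_P : SS ≤ PP := by
  rw [LieSubalgebra.lieSpan_le]
  intro x hx
  rcases hx with rfl | hx
  · exact LieSubalgebra.subset_lieSpan (Set.mem_insert_iff.mpr (Or.inr rfl))
  · rcases hx with rfl
    rw [← hbr2]
    exact (LieSubalgebra.lieSpan k Der {pd 1, v 2}).lie_mem
      (LieSubalgebra.subset_lieSpan (Set.mem_insert _ _))
      (LieSubalgebra.subset_lieSpan (Set.mem_insert_iff.mpr (Or.inr rfl)))

include hbr2 hbr3 in
lemma fib_pd1_S : ∀ y ∈ SS, ⁅pd 1, y⁆ ∈ SS := by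
  set S := SS with hS
  let ad1 : Der →ₗ[k] Der := (LieAlgebra.ad k Der) (pd 1)
  let Q : LieSubalgebra k Der :=
    { toSubmodule := S.toSubmodule ⊓ Submodule.comap ad1 S.toSubmodule
      lie_mem' := by
        intro x y hx hy
        obtain ⟨hx1, hx2⟩ := hx
        obtain ⟨hy1, hy2⟩ := hy
        refine ⟨S.lie_mem hx1 hy1, ?_⟩
        have : ⁅pd 1, ⁅x, y⁆⁆ = ⁅⁅pd 1, x⁆, y⁆ + ⁅x, ⁅pd 1, y⁆⁆ := by
          rw [leibniz_lie]
        show (⁅pd 1, ⁅x, y⁆⁆ : Der) ∈ S.toSubmodule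
        rw [this]
        exact S.toSubmodule.add_mem (S.lie_mem hx2 hy1) (S.lie_mem hx1 hy2) }
  have hSQ : S ≤ Q := by
    rw [hS, LieSubalgebra.lieSpan_le]
    intro x hx
    rcases hx with rfl | hx
    · refine ⟨LieSubalgebra.subset_lieSpan (Set.mem_insert _ _), ?_⟩
      show (⁅pd 1, v 2⁆ : Der) ∈ S.toSubmodule
      rw [hbr2]
      exact LieSubalgebra.subset_lieSpan (Set.mem_insert_iff.mpr (Or.inr rfl))
    · rcases hx with rfl
      refine ⟨LieSubalgebra.subset_lieSpan (Set.mem_insert_iff.mpr (Or.inr rfl)), ?_⟩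
      show (⁅pd 1, v 3⁆ : Der) ∈ S.toSubmodule
      rw [hbr3]
      exact S.toSubmodule.zero_mem
  intro y hy
  exact (hSQ hy).2

include hbr2 hbr3 in
lemma fib_ideal : ∀ x ∈ PP, ∀ y ∈ SS, ⁅x, y⁆ ∈ SS := by
  have hP : PP ≤ (SS).normalizer := by
    rw [LieSubalgebra.lieSpan_le]
    intro x hx
    rcases hx with rfl | hx
    · rw [SetLike.mem_coe, LieSubalgebra.mem_normalizer_iff]
      exact fib_pd1_S pd v hbr2 hbr3
    · rcases hx with rfl
      exact (SS).le_normalizer (LieSubalgebra.subset_lieSpan (Set.mem_insert _ _))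
  intro x hx y hy
  exact (LieSubalgebra.mem_normalizer_iff _ _).mp (hP hx) y hy

include hbr2 hbr3 in
lemma fib_sup :
    Submodule.span k {pd 1} ⊔ (SS).toSubmodule = (PP).toSubmodule := by
  apply le_antisymm
  · apply sup_le
    · rw [Submodule.span_le, Set.singleton_subset_iff]
      exact LieSubalgebra.subset_lieSpan (Set.mem_insert _ _)
    · exact fun x hx => fib_S_le_P pd v hbr2 hx
  · let Q : LieSubalgebra k Der :=
      { toSubmodule := Submodule.span k {pd 1} ⊔ (SS).toSubmodule
        lie_mem' := by
          intro x y hx hy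
          replace hx : x ∈ (Submodule.span k {pd 1} ⊔ (SS).toSubmodule) := hx
          replace hy : y ∈ (Submodule.span k {pd 1} ⊔ (SS).toSubmodule) := hy
          rw [Submodule.mem_sup] at hx hy
          obtain ⟨x1, hx1, x2, hx2, rfl⟩ := hx
          obtain ⟨y1, hy1, y2, hy2, rfl⟩ := hy
          obtain ⟨a, rfl⟩ := Submodule.mem_span_singleton.mp hx1
          obtain ⟨b, rfl⟩ := Submodule.mem_span_singleton.mp hy1
          have hmem : (⁅a • pd 1 + x2, b • pd 1 + y2⁆ : Der) ∈ (SS).toSubmodule := by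
            have h1 : (⁅pd 1, b • pd 1⁆ : Der) = 0 := by
              rw [← lie_skew, smul_lie, lie_self, smul_zero, neg_zero]
            have h2 : (⁅x2, b • pd 1⁆ : Der) = b • ⁅x2, pd 1⁆ := by
              rw [← lie_skew, smul_lie, ← smul_neg, lie_skew]
            have h3 : (⁅x2, pd 1⁆ : Der) = -⁅pd 1, x2⁆ := by rw [← lie_skew]
            have expand : (⁅a • pd 1 + x2, b • pd 1 + y2⁆ : Der)
                = a • ⁅pd 1, b • pd 1⁆ + ⁅x2, b • pd 1⁆ + (a • ⁅pd 1, y2⁆ + ⁅x2, y2⁆) := by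
              simp only [add_lie, lie_add, smul_lie]
            rw [expand, h1, smul_zero, zero_add, h2, h3]
            refine Submodule.add_mem _ (Submodule.smul_mem _ _ (Submodule.neg_mem _ ?_))
              (Submodule.add_mem _ (Submodule.smul_mem _ _ ?_) ?_)
            · exact fib_pd1_S pd v hbr2 hbr3 x2 hx2
            · exact fib_pd1_S pd v hbr2 hbr3 y2 hy2
            · exact (SS).lie_mem hx2 hy2
          exact Submodule.mem_sup_right hmem }
    have hPQ : PP ≤ Q := by
      rw [LieSubalgebra.lieSpan_le]
      intro x hx
      rcases hx with rfl | hx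
      · exact Submodule.mem_sup_left (Submodule.mem_span_singleton_self _)
      · rcases hx with rfl
        exact Submodule.mem_sup_right
          (LieSubalgebra.subset_lieSpan (Set.mem_insert _ _))
    exact fun x hx => hPQ hx

include hext hpd hvlt in
lemma fib_inf :
    Submodule.span k {pd 1} ⊓ (SS).toSubmodule = ⊥ := by
  rw [eq_bot_iff]
  rintro x ⟨hx1, hx2⟩
  obtain ⟨a, rfl⟩ := Submodule.mem_span_singleton.mp hx1
  -- every element of SS kills t 1
  let ev : Der →ₗ[k] R :=
    { toFun := fun D => D (t 1)
      map_add' := fun a b => rfl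
      map_smul' := fun c D => rfl }
  let Z : LieSubalgebra k Der :=
    { toSubmodule := LinearMap.ker ev
      lie_mem' := by
        intro x y hx hy
        have hx' : x (t 1) = 0 := hx
        have hy' : y (t 1) = 0 := hy
        show (⁅x, y⁆ : Der) (t 1) = 0
        rw [Derivation.commutator_apply, hx', hy', map_zero, map_zero, sub_zero]
    }
  have hSZ : SS ≤ Z := by
    rw [LieSubalgebra.lieSpan_le]
    intro x hx
    rcases hx with rfl | hx
    · show v 2 (t 1) = 0
      exact hvlt 2 1 (by norm_num) (by norm_num)
    · rcases hx with rfl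
      show v 3 (t 1) = 0
      exact hvlt 3 1 (by norm_num) (by norm_num)
  have hval : (a • pd 1) (t 1) = 0 := hSZ hx2
  have : a • pd 1 = 0 := by
    apply hext
    intro j
    rcases eq_or_ne j 1 with rfl | hj
    · rw [hval]; rfl
    · show a • (pd 1) (t j) = (0 : Der) (t j)
      rw [hpd, if_neg (fun h => hj h.symm)]
      show a • (0 : R) = (0 : R)
      rw [smul_zero]
  rw [this]
  exact Submodule.zero_mem ⊥

end FibParts

/-- The Lie algebra `L̃ = L/A = ⟨∂₁, v₂⟩ ⊆ Der(R)` decomposes as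
`L̃ = k∂₁ ⋉ L₁`, a semidirect product of the one-dimensional subalgebra spanned by `∂₁` with
the ideal `L₁ = ⟨v₂, v₃⟩`, and `L₁ ≅ L` via the shift `τ` (sending `vᵢ` to `v_{i+1}`). -/
theorem fibonacci_quotient_semidirect
    {k : Type} [Field k] [CharP k 2]
    {R : Type} [CommRing R] [Algebra k R]
    -- `R = k[t₀, t₁, …]/(tᵢ²)` is the ring of truncated polynomials:
    (t : ℕ → R)
    (hsq : ∀ i, t i ^ 2 = 0)
    (hadj : Algebra.adjoin k (Set.range t) = ⊤)
    (hext : ∀ D D' : Derivation k R R, (∀ j, D (t j) = D' (t j)) → D = D')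
    -- `pd i` is the partial derivative `∂ᵢ = ∂/∂tᵢ`:
    (pd : ℕ → Derivation k R R)
    (hpd : ∀ i j, pd i (t j) = if i = j then 1 else 0)
    -- `v i` are the pivot elements, defined recursively by `vᵢ = ∂ᵢ + t_{i-1} v_{i+1}`,
    -- i.e. the derivations `vᵢ = ∂ᵢ + t_{i-1}(∂_{i+1} + tᵢ(∂_{i+2} + ⋯))`:
    (v : ℕ → Derivation k R R)
    (hrec : ∀ i, 1 ≤ i → v i = pd i + t (i - 1) • v (i + 1))
    (hvlt : ∀ i j, 1 ≤ i → j < i → v i (t j) = 0)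
    (hveq : ∀ i, 1 ≤ i → v i (t i) = 1)
    (hvgt : ∀ i j, 1 ≤ i → i < j → v i (t j) = ∏ m ∈ Finset.Ico (i - 1) (j - 1), t m)
    : (LieSubalgebra.lieSpan k (Derivation k R R) {v 2, v 3}).toSubmodule ≤
          (LieSubalgebra.lieSpan k (Derivation k R R) {pd 1, v 2}).toSubmodule ∧
        (∀ x ∈ LieSubalgebra.lieSpan k (Derivation k R R) {pd 1, v 2},
          ∀ y ∈ LieSubalgebra.lieSpan k (Derivation k R R) {v 2, v 3},
            ⁅x, y⁆ ∈ (LieSubalgebra.lieSpan k (Derivation k R R) {v 2, v 3}).toSubmodule) ∧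
        Submodule.span k {pd 1} ⊔
            (LieSubalgebra.lieSpan k (Derivation k R R) {v 2, v 3}).toSubmodule =
          (LieSubalgebra.lieSpan k (Derivation k R R) {pd 1, v 2}).toSubmodule ∧
        Submodule.span k {pd 1} ⊓
            (LieSubalgebra.lieSpan k (Derivation k R R) {v 2, v 3}).toSubmodule = ⊥ ∧
        ∃ e : ↥(LieSubalgebra.lieSpan k (Derivation k R R) {v 1, v 2}) ≃ₗ⁅k⁆
            ↥(LieSubalgebra.lieSpan k (Derivation k R R) {v 2, v 3}),
          ∀ i, 1 ≤ i →
            ∀ h : v i ∈ LieSubalgebra.lieSpan k (Derivation k R R) {v 1, v 2},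
              ((e ⟨v i, h⟩ :
                  ↥(LieSubalgebra.lieSpan k (Derivation k R R) {v 2, v 3})) :
                Derivation k R R) = v (i + 1) := by
  have hbr2 : ⁅pd 1, v 2⁆ = v 3 := fib_br_pd1_v2 t hext pd hpd v hvlt hveq hvgt
  have hbr3 : ⁅pd 1, v 3⁆ = 0 := fib_br_pd1_v3 t hext pd hpd v hvlt hveq hvgt
  refine ⟨fun x hx => fib_S_le_P pd v hbr2 hx,
    fib_ideal pd v hbr2 hbr3,
    fib_sup pd v hbr2 hbr3,
    fib_inf t hext pd hpd v hvlt, ?_⟩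
  rcases subsingleton_or_nontrivial R with hR | hR
  · -- degenerate case: `R` is the zero ring, so all derivations are equal
    have hsub : Subsingleton (Derivation k R R) :=
      ⟨fun a b => hext a b (fun j => Subsingleton.elim _ _)⟩
    let f : ↥(LieSubalgebra.lieSpan k (Derivation k R R) {v 1, v 2}) →ₗ⁅k⁆
        ↥(LieSubalgebra.lieSpan k (Derivation k R R) {v 2, v 3}) :=
      { toFun := fun _ => 0
        map_add' := fun x y => (Subsingleton.elim _ _)
        map_smul' := fun c x => (Subsingleton.elim _ _)
        map_lie' := fun {x y} => (Subsingleton.elim _ _) }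
    have hfbij : Function.Bijective f :=
      ⟨fun a b _ => Subsingleton.elim a b, fun y => ⟨0, Subsingleton.elim _ _⟩⟩
    exact ⟨LieEquiv.ofBijective f hfbij, fun i hi h => Subsingleton.elim _ _⟩
  · have hbij : Function.Bijective
        (Finsupp.linearCombination k (fibMono t : Finset ℕ → R)) :=
      ⟨fib_T_inj t hsq pd hpd, fib_T_surj t hsq hadj⟩
    exact fib_part5 t hsq hadj hext hbij v hvlt hveq hvgt
end
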